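/- arXiv:2311.02224 — 4 statements merged into one kernel-verified Lean document; each statement's English description precedes it below -/
import Mathlib

section
/- Consider an instance of n ≥ 2 keys with nonnegative weights and total weight W, and let α and β be the largest and second-largest key weights (α ≥ β). If 2α + β ≥ W, then there exists an optimal 2WCST for the instance whose root is an equal-to test. -/
namespace TwoWCST

/-- A two-way comparison search tree: leaves hold keys, internal nodes are
equal-to tests `⟨= k⟩` or less-than tests `⟨< k⟩`, each with a yes and a no child. -/
inductive CTree : Type where
  | leaf (k : ℕ) : CTree
  | eqTest (k : ℕ) (yes no : CTree) : CTree
  | ltTest (k : ℕ) (yes no : CTree) : CTree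

/-- The leaf reached when searching for query `q`. -/
def searchKey : CTree → ℕ → ℕ
  | .leaf k, _ => k
  | .eqTest k y n, q => if q = k then searchKey y q else searchKey n q
  | .ltTest k y n, q => if q < k then searchKey y q else searchKey n q

/-- Number of comparisons on the search path of `q`. -/
def depthOf : CTree → ℕ → ℕ
  | .leaf _, _ => 0
  | .eqTest k y n, q => (if q = k then depthOf y q else depthOf n q) + 1
  | .ltTest k y n, q => (if q < k then depthOf y q else depthOf n q) + 1

/-- The set of keys labeling the leaves of the tree. -/
def leaves : CTree → Finset ℕ
  | .leaf k => {k}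
  | .eqTest _ y n => leaves y ∪ leaves n
  | .ltTest _ y n => leaves y ∪ leaves n

/-- `T` is a 2WCST for the sub-instance `I`: every leaf is labeled by a key of `I`,
and the search for every key `q ∈ I` ends at a leaf labeled `q`. -/
def Valid (I : Finset ℕ) (T : CTree) : Prop :=
  leaves T ⊆ I ∧ ∀ q ∈ I, searchKey T q = q

/-- Cost of a 2WCST: `∑ q ∈ I, w q * depth_T q`. -/
noncomputable def cost (w : ℕ → ℝ) (I : Finset ℕ) (T : CTree) : ℝ :=
  ∑ q ∈ I, w q * (depthOf T q : ℝ)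

/-- `T` is an optimal 2WCST for `I` (w.r.t. weights `w`). -/
def IsOptimal (w : ℕ → ℝ) (I : Finset ℕ) (T : CTree) : Prop :=
  Valid I T ∧ ∀ T', Valid I T' → cost w I T ≤ cost w I T'

/-- Total weight of the keys at the leaves of `T`. -/
noncomputable def treeWeight (w : ℕ → ℝ) (T : CTree) : ℝ :=
  ∑ k ∈ leaves T, w k

/-- Side-weight of the root node of `T`. -/
noncomputable def sw (w : ℕ → ℝ) : CTree → ℝ
  | .leaf _ => 0
  | .eqTest k _ _ => w k
  | .ltTest _ y n => min (treeWeight w y) (treeWeight w n)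

/-- The root of `T` is an equal-to test. -/
def EqRoot : CTree → Prop
  | .eqTest _ _ _ => True
  | _ => False

/-- The root of `T` is a less-than test. -/
def LtRoot : CTree → Prop
  | .ltTest _ _ _ => True
  | _ => False

/-- `T` is rooted at two consecutive equal-to tests: the root is an equal-to test
and the root of its 'no' subtree is also an equal-to test. -/
def TwoEqRoot : CTree → Prop
  | .eqTest _ _ (.eqTest _ _ _) => True
  | _ => False

/-- All internal nodes of `T` are equal-to tests. -/
def OnlyEq : CTree → Prop
  | .leaf _ => True
  | .eqTest _ y n => OnlyEq y ∧ OnlyEq n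
  | .ltTest _ _ _ => False

/-- All internal nodes of `T` are less-than tests. -/
def OnlyLt : CTree → Prop
  | .leaf _ => True
  | .eqTest _ _ _ => False
  | .ltTest _ y n => OnlyLt y ∧ OnlyLt n

/-- `M` is the main branch of (the root of) `T`: the 'no' child for an equal-to
test, and a child subtree of maximum total weight for a less-than test
(either choice allowed in case of ties). -/
def IsMainBranch (w : ℕ → ℝ) (T M : CTree) : Prop :=
  match T with
  | .leaf _ => False
  | .eqTest _ _ n => M = n
  | .ltTest _ y n => (M = y ∧ treeWeight w n ≤ treeWeight w y) ∨
      (M = n ∧ treeWeight w y ≤ treeWeight w n)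

/-- `OPT I`: the minimum cost of a 2WCST for `I`. -/
noncomputable def OPT (w : ℕ → ℝ) (I : Finset ℕ) : ℝ :=
  sInf {c | ∃ T, Valid I T ∧ cost w I T = c}

/-- `C^=(I)`: the minimum cost of a 2WCST for `I` rooted at an equal-to test. -/
noncomputable def CEq (w : ℕ → ℝ) (I : Finset ℕ) : ℝ :=
  sInf {c | ∃ T, Valid I T ∧ EqRoot T ∧ cost w I T = c}

/-- `C^<(I)`: the minimum cost of a 2WCST for `I` rooted at a less-than test. -/
noncomputable def CLt (w : ℕ → ℝ) (I : Finset ℕ) : ℝ :=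
  sInf {c | ∃ T, Valid I T ∧ LtRoot T ∧ cost w I T = c}

section
noncomputable def WS (w : ℕ → ℝ) (S : Finset ℕ) : ℝ := ∑ k ∈ S, w k

noncomputable def dpF (w : ℕ → ℝ) : ℕ → Finset ℕ → ℝ
  | 0, _ => 0
  | n+1, S =>
    if h2 : 2 ≤ S.card then
      ((S.image fun k => WS w S + dpF w n (S.erase k)) ∪
        ((S.filter fun c => (S.filter (· < c)).Nonempty).image fun c =>
          WS w S + dpF w n (S.filter (· < c)) + dpF w n (S.filter fun x => ¬ x < c))).min'
        (Finset.Nonempty.inl (Finset.Nonempty.image (Finset.card_pos.mp (by omega)) _))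
    else 0

/-- stability of the fueled dp -/
lemma dpF_stable (w : ℕ → ℝ) : ∀ n S, S.card ≤ n → dpF w (n+1) S = dpF w n S := by
  intro n
  induction n with
  | zero =>
    intro S hS
    have : S.card = 0 := Nat.le_zero.mp hS
    simp [dpF, this]
  | succ n ih =>
    intro S hS
    show dpF w (n+2) S = dpF w (n+1) S
    by_cases h2 : 2 ≤ S.card
    · rw [dpF, dpF, dif_pos h2, dif_pos h2]
      congr 1
      have he : ∀ k ∈ S, dpF w (n+1) (S.erase k) = dpF w n (S.erase k) := by
        intro k hk
        exact ih _ (by have := Finset.card_erase_of_mem hk; omega)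
      have hf1 : ∀ c ∈ S, dpF w (n+1) (S.filter (· < c)) = dpF w n (S.filter (· < c)) := by
        intro c hc
        apply ih
        have hsub : S.filter (· < c) ⊆ S.erase c := by
          intro x hx
          simp only [Finset.mem_filter] at hx
          exact Finset.mem_erase.mpr ⟨by omega, hx.1⟩
        have := Finset.card_le_card hsub
        have := Finset.card_erase_of_mem hc
        omega
      have hf2 : ∀ c ∈ S, (S.filter (· < c)).Nonempty →
          dpF w (n+1) (S.filter fun x => ¬ x < c) = dpF w n (S.filter fun x => ¬ x < c) := by
        intro c hc hne
        apply ih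
        obtain ⟨x, hx⟩ := hne
        simp only [Finset.mem_filter] at hx
        have hsub : (S.filter fun y => ¬ y < c) ⊆ S.erase x := by
          intro y hy
          simp only [Finset.mem_filter] at hy
          exact Finset.mem_erase.mpr ⟨by omega, hy.1⟩
        have := Finset.card_le_card hsub
        have := Finset.card_erase_of_mem hx.1
        omega
      congr 1
      · apply Finset.image_congr
        intro k hk
        show WS w S + dpF w (n+1) (S.erase k) = WS w S + dpF w n (S.erase k)
        rw [he k (Finset.mem_coe.mp hk)]
      · apply Finset.image_congr
        intro c hc
        simp only [Finset.mem_coe, Finset.mem_filter] at hc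
        show WS w S + dpF w (n+1) (S.filter (· < c)) + dpF w (n+1) (S.filter fun x => ¬ x < c) = _
        rw [hf1 c hc.1, hf2 c hc.1 hc.2]
    · rw [dpF, dpF, dif_neg h2, dif_neg h2]

noncomputable def DP (w : ℕ → ℝ) (S : Finset ℕ) : ℝ := dpF w S.card S

lemma DP_eq_dpF (w : ℕ → ℝ) (S : Finset ℕ) {n : ℕ} (h : S.card ≤ n) :
    DP w S = dpF w n S := by
  induction n with
  | zero => have : S.card = 0 := Nat.le_zero.mp h; simp [DP, this]
  | succ n ih =>
    rcases Nat.lt_or_ge S.card (n+1) with h' | h'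
    · rw [ih (by omega), dpF_stable w n S (by omega)]
    · have : S.card = n + 1 := by omega
      rw [DP, this]
end

section
variable (w : ℕ → ℝ)

lemma dp_card_le_one {S : Finset ℕ} (h : S.card ≤ 1) : DP w S = 0 := by
  have h1 : S.card ≤ S.card := le_refl _
  rw [DP]
  cases hn : S.card with
  | zero => simp [dpF]
  | succ n =>
    have h2 : ¬ 2 ≤ S.card := by omega
    rw [dpF, dif_neg h2]

noncomputable def cands (S : Finset ℕ) : Finset ℝ :=
  (S.image fun k => WS w S + DP w (S.erase k)) ∪
    ((S.filter fun c => (S.filter (· < c)).Nonempty).image fun c =>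
      WS w S + DP w (S.filter (· < c)) + DP w (S.filter fun x => ¬ x < c))

lemma cands_nonempty {S : Finset ℕ} (h2 : 2 ≤ S.card) : (cands w S).Nonempty :=
  Finset.Nonempty.inl (Finset.Nonempty.image (Finset.card_pos.mp (by omega)) _)

lemma dp_eq_min' {S : Finset ℕ} (h2 : 2 ≤ S.card) :
    DP w S = (cands w S).min' (cands_nonempty w h2) := by
  obtain ⟨m, hm⟩ : ∃ m, S.card = m + 1 := ⟨S.card - 1, by omega⟩
  have hDP : DP w S = dpF w (m+1) S := DP_eq_dpF w S (le_of_eq hm)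
  rw [hDP, dpF, dif_pos h2]
  have hcongr : ((S.image fun k => WS w S + dpF w m (S.erase k)) ∪
      ((S.filter fun c => (S.filter (· < c)).Nonempty).image fun c =>
        WS w S + dpF w m (S.filter (· < c)) + dpF w m (S.filter fun x => ¬ x < c)))
      = cands w S := by
    rw [cands]
    congr 1
    · apply Finset.image_congr
      intro k hk
      exact congrArg (fun r => WS w S + r)
        (DP_eq_dpF w (S.erase k)
          (by have := Finset.card_erase_of_mem (Finset.mem_coe.mp hk); omega)).symm
    · apply Finset.image_congr
      intro c hc
      simp only [Finset.mem_coe, Finset.mem_filter] at hc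
      show WS w S + dpF w m (S.filter (· < c)) + dpF w m (S.filter fun x => ¬ x < c)
        = WS w S + DP w (S.filter (· < c)) + DP w (S.filter fun x => ¬ x < c)
      have hc1 : (S.filter (· < c)).card ≤ m := by
        have hsub : S.filter (· < c) ⊆ S.erase c := by
          intro x hx
          simp only [Finset.mem_filter] at hx
          exact Finset.mem_erase.mpr ⟨by omega, hx.1⟩
        have := Finset.card_le_card hsub
        have := Finset.card_erase_of_mem hc.1
        omega
      have hc2 : (S.filter fun x => ¬ x < c).card ≤ m := by
        obtain ⟨x, hx⟩ := hc.2
        simp only [Finset.mem_filter] at hx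
        have hsub : (S.filter fun y => ¬ y < c) ⊆ S.erase x := by
          intro y hy
          simp only [Finset.mem_filter] at hy
          exact Finset.mem_erase.mpr ⟨by omega, hy.1⟩
        have := Finset.card_le_card hsub
        have := Finset.card_erase_of_mem hx.1
        omega
      rw [DP_eq_dpF w _ hc1, DP_eq_dpF w _ hc2]
  congr 1

lemma dp_le_eqCand {S : Finset ℕ} (h2 : 2 ≤ S.card) {k : ℕ} (hk : k ∈ S) :
    DP w S ≤ WS w S + DP w (S.erase k) := by
  rw [dp_eq_min' w h2]
  exact Finset.min'_le _ _ (Finset.mem_union_left _ (Finset.mem_image_of_mem _ hk))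

lemma dp_le_ltCand {S : Finset ℕ} (h2 : 2 ≤ S.card) {c : ℕ} (hc : c ∈ S)
    (hne : (S.filter (· < c)).Nonempty) :
    DP w S ≤ WS w S + DP w (S.filter (· < c)) + DP w (S.filter fun x => ¬ x < c) := by
  rw [dp_eq_min' w h2]
  refine Finset.min'_le _ _ (Finset.mem_union_right _ ?_)
  exact Finset.mem_image_of_mem _ (Finset.mem_filter.mpr ⟨hc, hne⟩)

lemma dp_witness {S : Finset ℕ} (h2 : 2 ≤ S.card) :
    (∃ k ∈ S, DP w S = WS w S + DP w (S.erase k)) ∨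
    (∃ c ∈ S, (S.filter (· < c)).Nonempty ∧
      DP w S = WS w S + DP w (S.filter (· < c)) + DP w (S.filter fun x => ¬ x < c)) := by
  have hmem : (cands w S).min' (cands_nonempty w h2) ∈ cands w S := Finset.min'_mem _ _
  rw [← dp_eq_min' w h2] at hmem
  rw [cands, Finset.mem_union] at hmem
  rcases hmem with hmem | hmem
  · obtain ⟨k, hk, heq⟩ := Finset.mem_image.mp hmem
    exact Or.inl ⟨k, hk, heq.symm⟩
  · obtain ⟨c, hc, heq⟩ := Finset.mem_image.mp hmem
    rw [Finset.mem_filter] at hc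
    exact Or.inr ⟨c, hc.1, hc.2, heq.symm⟩

variable {w}

lemma WS_nonneg (hw : ∀ k, 0 ≤ w k) (S : Finset ℕ) : 0 ≤ WS w S :=
  Finset.sum_nonneg fun k _ => hw k

lemma filter_lt_ssubset {S : Finset ℕ} {c : ℕ} (hc : c ∈ S) :
    S.filter (· < c) ⊂ S := by
  refine ⟨Finset.filter_subset _ _, fun hsub => ?_⟩
  have := hsub hc
  simp at this

lemma filter_ge_ssubset {S : Finset ℕ} {c : ℕ} (hne : (S.filter (· < c)).Nonempty) :
    (S.filter fun x => ¬ x < c) ⊂ S := by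
  obtain ⟨x, hx⟩ := hne
  simp only [Finset.mem_filter] at hx
  refine ⟨Finset.filter_subset _ _, fun hsub => ?_⟩
  have := hsub hx.1
  simp only [Finset.mem_filter] at this
  omega

lemma dp_nonneg (hw : ∀ k, 0 ≤ w k) (S : Finset ℕ) : 0 ≤ DP w S := by
  induction S using Finset.strongInduction with
  | _ S ih =>
    by_cases h2 : 2 ≤ S.card
    · rcases dp_witness w h2 with ⟨k, hk, heq⟩ | ⟨c, hc, hne, heq⟩
      · rw [heq]
        have h1 : 0 ≤ DP w (S.erase k) := ih _ (Finset.erase_ssubset hk)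
        have := WS_nonneg hw S
        linarith
      · rw [heq]
        have h1 := ih _ (filter_lt_ssubset hc)
        have h2 := ih _ (filter_ge_ssubset hne)
        have := WS_nonneg hw S
        linarith
    · rw [dp_card_le_one w (by omega)]

lemma dp_ge_WS (hw : ∀ k, 0 ≤ w k) {S : Finset ℕ} (h2 : 2 ≤ S.card) :
    WS w S ≤ DP w S := by
  rcases dp_witness w h2 with ⟨k, hk, heq⟩ | ⟨c, hc, hne, heq⟩
  · rw [heq]; have := dp_nonneg hw (S.erase k); linarith
  · rw [heq]
    have := dp_nonneg hw (S.filter (· < c))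
    have := dp_nonneg hw (S.filter fun x => ¬ x < c)
    linarith

lemma dp_card_two (hw : ∀ k, 0 ≤ w k) {S : Finset ℕ} (h2 : S.card = 2) :
    DP w S = WS w S := by
  obtain ⟨k, hk⟩ := Finset.card_pos.mp (by omega : 0 < S.card)
  have hle := dp_le_eqCand w (by omega) hk
  rw [dp_card_le_one w (S := S.erase k) (by rw [Finset.card_erase_of_mem hk]; omega)] at hle
  have := dp_ge_WS hw (by omega : 2 ≤ S.card)
  linarith
end

section
variable {w : ℕ → ℝ}

lemma WS_split (w : ℕ → ℝ) (S : Finset ℕ) (c : ℕ) :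
    WS w S = WS w (S.filter (· < c)) + WS w (S.filter fun x => ¬ x < c) :=
  (Finset.sum_filter_add_sum_filter_not S _ w).symm

lemma WS_erase (w : ℕ → ℝ) {S : Finset ℕ} {k : ℕ} (hk : k ∈ S) :
    WS w S = w k + WS w (S.erase k) := by
  rw [WS, WS, ← Finset.sum_erase_add S w hk, add_comm]

lemma single_le_WS (hw : ∀ k, 0 ≤ w k) {S : Finset ℕ} {k : ℕ} (hk : k ∈ S) :
    w k ≤ WS w S := by
  have := dp_nonneg hw (S.erase k)
  have h := WS_erase w hk
  have := WS_nonneg hw (S.erase k)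
  linarith

/-- MONO+ : removing any key from an instance with ≥ 2 keys saves at least its weight. -/
lemma dp_removeKey (hw : ∀ k, 0 ≤ w k) (S : Finset ℕ) :
    2 ≤ S.card → ∀ x ∈ S, w x + DP w (S.erase x) ≤ DP w S := by
  induction S using Finset.strongInduction with
  | _ S ih =>
    intro h2 x hx
    rcases dp_witness w h2 with ⟨k, hk, heq⟩ | ⟨c, hc, hne, heq⟩
    · -- eq witness
      by_cases hkx : k = x
      · subst hkx
        rw [heq]
        have := single_le_WS hw hk
        linarith
      · by_cases hcard : 2 ≤ (S.erase k).card
        · have hxek : x ∈ S.erase k := Finset.mem_erase.mpr ⟨fun h => hkx h.symm, hx⟩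
          have hIH := ih _ (Finset.erase_ssubset hk) hcard x hxek
          have hkx' : k ∈ S.erase x := Finset.mem_erase.mpr ⟨hkx, hk⟩
          have hcard' : 2 ≤ (S.erase x).card := by
            rw [Finset.card_erase_of_mem hx]
            rw [Finset.card_erase_of_mem hk] at hcard
            omega
          have hcand := dp_le_eqCand w hcard' hkx'
          have hcomm : (S.erase x).erase k = (S.erase k).erase x := Finset.erase_right_comm
          rw [hcomm] at hcand
          have hws : WS w S = w x + WS w (S.erase x) := WS_erase w hx
          have hwx := hw x
          linarith [heq.ge, heq.le]
        · -- S = {k, x}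
          have hcS : S.card = 2 := by
            have := Finset.card_erase_of_mem hk
            have : (S.erase k).card = S.card - 1 := this
            omega
          rw [heq]
          have h1 : (S.erase k).card ≤ 1 := by
            rw [Finset.card_erase_of_mem hk]; omega
          have h1' : (S.erase x).card ≤ 1 := by
            rw [Finset.card_erase_of_mem hx]; omega
          rw [dp_card_le_one w h1, dp_card_le_one w h1']
          have := single_le_WS hw hx
          linarith
    · -- cut witness
      set S1 := S.filter (· < c) with hS1def
      set S2 := S.filter (fun y => ¬ y < c) with hS2def
      have hcS2 : c ∈ S2 := by
        rw [hS2def, Finset.mem_filter]; exact ⟨hc, by omega⟩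
      have hS2ne : S2.Nonempty := ⟨c, hcS2⟩
      have hWsplit : WS w S = WS w S1 + WS w S2 := WS_split w S c
      by_cases hxlt : x < c
      · have hxS1 : x ∈ S1 := by rw [hS1def, Finset.mem_filter]; exact ⟨hx, hxlt⟩
        by_cases hcard1 : 2 ≤ S1.card
        · have hIH := ih _ (filter_lt_ssubset hc) hcard1 x hxS1
          -- cut candidate for S.erase x at c
          have hcx : c ∈ S.erase x := Finset.mem_erase.mpr ⟨by omega, hc⟩
          have hf1 : (S.erase x).filter (· < c) = S1.erase x := by
            rw [hS1def, Finset.filter_erase]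
          have hf2 : (S.erase x).filter (fun y => ¬ y < c) = S2 := by
            rw [hS2def, Finset.filter_erase]
            exact Finset.erase_eq_of_notMem (by
              rw [Finset.mem_filter]; push_neg; intro _; omega)
          have hf1ne : ((S.erase x).filter (· < c)).Nonempty := by
            rw [hf1]
            obtain ⟨y, hy⟩ := Finset.card_pos.mp (by
              rw [Finset.card_erase_of_mem hxS1]; omega : 0 < (S1.erase x).card)
            exact ⟨y, hy⟩
          have hcard' : 2 ≤ (S.erase x).card := by
            have hsub1 : S1.erase x ⊆ S.erase x := by
              intro y hy
              rw [Finset.mem_erase] at hy ⊢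
              exact ⟨hy.1, (Finset.filter_subset _ _) hy.2⟩
            have : c ∈ S.erase x := hcx
            have hcx1 : c ∉ S1.erase x := by
              rw [Finset.mem_erase, hS1def, Finset.mem_filter]
              push_neg
              intro _ _
              omega
            obtain ⟨y, hy⟩ := hf1ne
            rw [hf1] at hy
            have : ({y, c} : Finset ℕ) ⊆ S.erase x := by
              intro z hz
              rcases Finset.mem_insert.mp hz with rfl | hz
              · exact hsub1 hy
              · rw [Finset.mem_singleton] at hz; subst hz; exact hcx
            have hcards : ({y, c} : Finset ℕ).card = 2 := by
              rw [Finset.card_insert_of_notMem, Finset.card_singleton]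
              rw [Finset.mem_singleton]
              intro hh
              subst hh
              exact hcx1 hy
            calc 2 = ({y, c} : Finset ℕ).card := hcards.symm
            _ ≤ _ := Finset.card_le_card this
          have hcand := dp_le_ltCand w hcard' hcx hf1ne
          rw [hf1, hf2] at hcand
          have hws : WS w S = w x + WS w (S.erase x) := WS_erase w hx
          have hwx := hw x
          linarith [heq.ge]
        · -- S1 = {x}
          have hS1x : S1 = {x} := by
            have : S1.card = 1 := by
              have := Finset.card_pos.mpr ⟨x, hxS1⟩
              omega
            obtain ⟨y, hy⟩ := Finset.card_eq_one.mp this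
            rw [hy] at hxS1 ⊢
            rw [Finset.mem_singleton] at hxS1
            rw [hxS1]
          have hSx : S.erase x = S2 := by
            ext y
            rw [Finset.mem_erase, hS2def, Finset.mem_filter]
            constructor
            · rintro ⟨hyx, hyS⟩
              refine ⟨hyS, fun hylt => hyx ?_⟩
              have : y ∈ S1 := by rw [hS1def, Finset.mem_filter]; exact ⟨hyS, hylt⟩
              rw [hS1x, Finset.mem_singleton] at this
              exact this
            · rintro ⟨hyS, hyge⟩
              exact ⟨by omega, hyS⟩
          rw [heq, hSx]
          have hDP1 : DP w S1 = 0 := by rw [hS1x]; exact dp_card_le_one w (by simp)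
          have := single_le_WS hw hx
          have := dp_nonneg hw S2
          linarith
      · -- x ∈ S2
        have hxS2 : x ∈ S2 := by rw [hS2def, Finset.mem_filter]; exact ⟨hx, hxlt⟩
        by_cases hcard2 : 2 ≤ S2.card
        · have hIH := ih _ (filter_ge_ssubset hne) hcard2 x hxS2
          have hS2xne : (S2.erase x).Nonempty := Finset.card_pos.mp (by
            rw [Finset.card_erase_of_mem hxS2]; omega)
          set c' := (S2.erase x).min' hS2xne with hc'def
          have hc'mem : c' ∈ S2.erase x := Finset.min'_mem _ _
          have hc'S2 : c' ∈ S2 := (Finset.mem_erase.mp hc'mem).2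
          have hc'x : c' ≠ x := (Finset.mem_erase.mp hc'mem).1
          have hc'S : c' ∈ S.erase x := Finset.mem_erase.mpr ⟨hc'x, (Finset.filter_subset _ _) hc'S2⟩
          have hcc' : c ≤ c' := by
            have := (Finset.mem_filter.mp hc'S2).2
            omega
          have hf1 : (S.erase x).filter (· < c') = S1 := by
            ext y
            rw [Finset.mem_filter, Finset.mem_erase, hS1def, Finset.mem_filter]
            constructor
            · rintro ⟨⟨hyx, hyS⟩, hylt⟩
              refine ⟨hyS, ?_⟩
              by_contra hyge
              have hyS2 : y ∈ S2 := by rw [hS2def, Finset.mem_filter]; exact ⟨hyS, hyge⟩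
              have : c' ≤ y := Finset.min'_le _ _ (Finset.mem_erase.mpr ⟨hyx, hyS2⟩)
              omega
            · rintro ⟨hyS, hylt⟩
              have hyx : y ≠ x := by
                intro hh; subst hh
                have := (Finset.mem_filter.mp hxS2).2
                omega
              exact ⟨⟨hyx, hyS⟩, by omega⟩
          have hf2 : (S.erase x).filter (fun y => ¬ y < c') = S2.erase x := by
            ext y
            rw [Finset.mem_filter, Finset.mem_erase, Finset.mem_erase, hS2def, Finset.mem_filter]
            constructor
            · rintro ⟨⟨hyx, hyS⟩, hyge⟩
              exact ⟨hyx, hyS, by omega⟩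
            · rintro ⟨hyx, hyS, hyge⟩
              refine ⟨⟨hyx, hyS⟩, ?_⟩
              have : c' ≤ y := Finset.min'_le _ _ (Finset.mem_erase.mpr ⟨hyx, by
                rw [hS2def, Finset.mem_filter]; exact ⟨hyS, hyge⟩⟩)
              omega
          have hf1ne : ((S.erase x).filter (· < c')).Nonempty := by rw [hf1]; exact hne
          have hcard' : 2 ≤ (S.erase x).card := by
            obtain ⟨y, hy⟩ := hne
            have hyS : y ∈ S.erase x := by
              rw [Finset.mem_erase]
              rw [hS1def, Finset.mem_filter] at hy
              refine ⟨fun hh => ?_, hy.1⟩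
              subst hh
              have := (Finset.mem_filter.mp hxS2).2
              omega
            have hsub : ({y, c'} : Finset ℕ) ⊆ S.erase x := by
              intro z hz
              rcases Finset.mem_insert.mp hz with rfl | hz
              · exact hyS
              · rw [Finset.mem_singleton] at hz; subst hz; exact hc'S
            have hyc' : y ≠ c' := by
              rw [hS1def, Finset.mem_filter] at hy
              omega
            calc 2 = ({y, c'} : Finset ℕ).card := by
                  rw [Finset.card_insert_of_notMem (by rw [Finset.mem_singleton]; exact hyc'),
                    Finset.card_singleton]
            _ ≤ _ := Finset.card_le_card hsub
          have hcand := dp_le_ltCand w hcard' hc'S hf1ne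
          rw [hf1, hf2] at hcand
          have hws : WS w S = w x + WS w (S.erase x) := WS_erase w hx
          have hwx := hw x
          linarith [heq.ge]
        · -- S2 = {x}
          have hS2x : S2 = {x} := by
            have : S2.card = 1 := by
              have := Finset.card_pos.mpr ⟨x, hxS2⟩
              omega
            obtain ⟨y, hy⟩ := Finset.card_eq_one.mp this
            rw [hy] at hxS2 ⊢
            rw [Finset.mem_singleton] at hxS2
            rw [hxS2]
          have hSx : S.erase x = S1 := by
            ext y
            rw [Finset.mem_erase, hS1def, Finset.mem_filter]
            constructor
            · rintro ⟨hyx, hyS⟩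
              refine ⟨hyS, ?_⟩
              by_contra hyge
              have : y ∈ S2 := by rw [hS2def, Finset.mem_filter]; exact ⟨hyS, hyge⟩
              rw [hS2x, Finset.mem_singleton] at this
              exact hyx this
            · rintro ⟨hyS, hylt⟩
              have : x ∈ S2 := hxS2
              rw [hS2def, Finset.mem_filter] at this
              exact ⟨by omega, hyS⟩
          rw [heq, hSx]
          have hDP2 : DP w S2 = 0 := by rw [hS2x]; exact dp_card_le_one w (by simp)
          have := single_le_WS hw hx
          have := dp_nonneg hw S1
          linarith
end

section
variable {w : ℕ → ℝ}

lemma WS_union (w : ℕ → ℝ) {A B : Finset ℕ} (h : Disjoint A B) :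
    WS w (A ∪ B) = WS w A + WS w B := Finset.sum_union h

lemma disjoint_of_ordered {A B : Finset ℕ} (hO : ∀ a ∈ A, ∀ b ∈ B, a < b) :
    Disjoint A B := by
  rw [Finset.disjoint_left]
  intro x hxA hxB
  exact absurd (hO x hxA x hxB) (lt_irrefl x)

/-- generic cut candidate: if `S` splits as ordered union `A ∪ B`, cutting is a candidate. -/
lemma dp_le_cut_sets (w : ℕ → ℝ) {S A B : Finset ℕ} (hA : A.Nonempty) (hB : B.Nonempty)
    (hU : A ∪ B = S) (hO : ∀ a ∈ A, ∀ b ∈ B, a < b) :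
    DP w S ≤ WS w S + DP w A + DP w B := by
  have hD : Disjoint A B := disjoint_of_ordered hO
  set c := B.min' hB with hc
  have hcB : c ∈ B := Finset.min'_mem _ _
  have hcS : c ∈ S := by rw [← hU]; exact Finset.mem_union_right _ hcB
  have hfA : S.filter (· < c) = A := by
    ext y
    rw [Finset.mem_filter, ← hU, Finset.mem_union]
    constructor
    · rintro ⟨hy | hy, hlt⟩
      · exact hy
      · have := Finset.min'_le B y hy
        omega
    · intro hy
      exact ⟨Or.inl hy, hO y hy c hcB⟩
  have hfB : S.filter (fun x => ¬ x < c) = B := by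
    ext y
    rw [Finset.mem_filter, ← hU, Finset.mem_union]
    constructor
    · rintro ⟨hy | hy, hge⟩
      · exact absurd (hO y hy c hcB) hge
      · exact hy
    · intro hy
      have := Finset.min'_le B y hy
      exact ⟨Or.inr hy, by omega⟩
  have h2 : 2 ≤ S.card := by
    obtain ⟨a, ha⟩ := hA
    obtain ⟨b, hb⟩ := hB
    have hsub : ({a, b} : Finset ℕ) ⊆ S := by
      intro z hz
      rcases Finset.mem_insert.mp hz with rfl | hz
      · rw [← hU]; exact Finset.mem_union_left _ ha
      · rw [Finset.mem_singleton] at hz; subst hz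
        rw [← hU]; exact Finset.mem_union_right _ hb
    have hab : a ≠ b := by have := hO a ha b hb; omega
    calc 2 = ({a, b} : Finset ℕ).card := by
          rw [Finset.card_insert_of_notMem (by rw [Finset.mem_singleton]; exact hab),
            Finset.card_singleton]
    _ ≤ S.card := Finset.card_le_card hsub
  have := dp_le_ltCand w h2 hcS (by rw [hfA]; exact hA)
  rw [hfA, hfB] at this
  exact this

/-- the statement P1: an equality witness in an instance with ≥ 3 keys tests a maximum weight key -/
def P1S (w : ℕ → ℝ) (S : Finset ℕ) : Prop :=
  ∀ k ∈ S, 3 ≤ S.card → DP w S = WS w S + DP w (S.erase k) → ∀ x ∈ S, w x ≤ w k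

/-- P2: in a cut witness whose upper part has ≥ 2 keys and contains all maximum-weight keys,
the lower part weighs at least the maximum weight. -/
def P2S (w : ℕ → ℝ) (S : Finset ℕ) : Prop :=
  ∀ c ∈ S, (S.filter (· < c)).Nonempty →
    DP w S = WS w S + DP w (S.filter (· < c)) + DP w (S.filter fun x => ¬ x < c) →
    ∀ b ∈ (S.filter fun x => ¬ x < c), (∀ x ∈ (S.filter fun x => ¬ x < c), w x ≤ w b) →
    (∀ x ∈ S.filter (· < c), w x < w b) → 2 ≤ (S.filter fun x => ¬ x < c).card →
    w b ≤ WS w (S.filter (· < c))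

/-- P2 mirrored: all maximum-weight keys in the lower part, which has ≥ 2 keys. -/
def P2mS (w : ℕ → ℝ) (S : Finset ℕ) : Prop :=
  ∀ c ∈ S, (S.filter (· < c)).Nonempty →
    DP w S = WS w S + DP w (S.filter (· < c)) + DP w (S.filter fun x => ¬ x < c) →
    ∀ b ∈ S.filter (· < c), (∀ x ∈ S.filter (· < c), w x ≤ w b) →
    (∀ x ∈ (S.filter fun x => ¬ x < c), w x < w b) → 2 ≤ (S.filter (· < c)).card →
    w b ≤ WS w (S.filter fun x => ¬ x < c)

lemma pack (hw : ∀ k, 0 ≤ w k) (S : Finset ℕ) : P1S w S ∧ P2S w S ∧ P2mS w S := by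
  induction S using Finset.strongInduction with
  | _ S ih =>
    refine ⟨?_, ?_, ?_⟩
    · -- P1
      intro k hk h3 E x hxS
      by_contra hcon
      push_neg at hcon
      set T := S.erase k with hTdef
      have hTcard : T.card = S.card - 1 := Finset.card_erase_of_mem hk
      have hcardT : 2 ≤ T.card := by omega
      have hTne : T.Nonempty := Finset.card_pos.mp (by omega)
      obtain ⟨b, hbT, hbmax⟩ := T.exists_max_image w hTne
      have hxk : x ≠ k := by intro h; subst h; exact absurd hcon (lt_irrefl _)
      have hxT : x ∈ T := Finset.mem_erase.mpr ⟨hxk, hxS⟩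
      have hkb : w k < w b := lt_of_lt_of_le hcon (hbmax x hxT)
      have hbS : b ∈ S := Finset.mem_of_mem_erase hbT
      have hbk : b ≠ k := (Finset.mem_erase.mp hbT).1
      have hWT : WS w S = w k + WS w T := WS_erase w hk
      rcases dp_witness w hcardT with ⟨j, hj, E2⟩ | ⟨c, hc, hne, E2⟩
      · -- T has eq-witness j
        have hjS : j ∈ S := Finset.mem_of_mem_erase hj
        have hjk : j ≠ k := (Finset.mem_erase.mp hj).1
        have hA := dp_le_eqCand w (by omega) hjS
        have hkSj : k ∈ S.erase j := Finset.mem_erase.mpr ⟨fun h => hjk h.symm, hk⟩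
        have hcSj : 2 ≤ (S.erase j).card := by
          rw [Finset.card_erase_of_mem hjS]; omega
        have hB := dp_le_eqCand w hcSj hkSj
        rw [Finset.erase_right_comm] at hB
        have hWj : WS w S = w j + WS w (S.erase j) := WS_erase w hjS
        have hWTj : WS w T = w j + WS w (T.erase j) := WS_erase w hj
        have hjlek : w j ≤ w k := by linarith
        by_cases hc2 : 2 ≤ (T.erase j).card
        · have hP1T := (ih T (Finset.erase_ssubset hk)).1
          have hTj : (T.erase j).card = T.card - 1 := Finset.card_erase_of_mem hj
          have := hP1T j hj (by omega) E2 b hbT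
          linarith
        · -- T = {j, b}
          have hTj : (T.erase j).card = T.card - 1 := Finset.card_erase_of_mem hj
          have hcT2 : T.card = 2 := by omega
          have hC := dp_le_eqCand w (by omega) hbS
          have hcard_Sb : (S.erase b).card = 2 := by
            rw [Finset.card_erase_of_mem hbS]; omega
          have hD : DP w (S.erase b) = WS w (S.erase b) := dp_card_two hw hcard_Sb
          have hDTj : DP w (T.erase j) = 0 := dp_card_le_one w (by omega)
          have hWb : WS w S = w b + WS w (S.erase b) := WS_erase w hbS
          linarith
      · -- T has cut-witness at c
        set T1 := T.filter (· < c) with hT1def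
        set T2 := T.filter (fun y => ¬ y < c) with hT2def
        have hcT2mem : c ∈ T2 := by
          rw [hT2def, Finset.mem_filter]; exact ⟨hc, by omega⟩
        have hT2ne : T2.Nonempty := ⟨c, hcT2mem⟩
        have hT12 : T1 ∪ T2 = T := Finset.filter_union_filter_not_eq _ T
        have hWT12 : WS w T = WS w T1 + WS w T2 := WS_split w T c
        have hkT : k ∉ T := Finset.notMem_erase k S
        have hkT1 : k ∉ T1 := fun h => hkT ((Finset.filter_subset _ _) h)
        have hkT2 : k ∉ T2 := fun h => hkT ((Finset.filter_subset _ _) h)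
        have hT1lt : ∀ y ∈ T1, y < c := fun y hy => (Finset.mem_filter.mp hy).2
        have hT2ge : ∀ y ∈ T2, c ≤ y := fun y hy => by
          have := (Finset.mem_filter.mp hy).2; omega
        have hbmax1 : ∀ y ∈ T1, w y ≤ w b := fun y hy =>
          hbmax y ((Finset.filter_subset _ _) hy)
        have hbmax2 : ∀ y ∈ T2, w y ≤ w b := fun y hy =>
          hbmax y ((Finset.filter_subset _ _) hy)
        by_cases hklt : k < c
        · -- k below the cut
          have hU : insert k T1 ∪ T2 = S := by
            rw [Finset.insert_union, hT12, hTdef, Finset.insert_erase hk]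
          have hO : ∀ a ∈ insert k T1, ∀ y ∈ T2, a < y := by
            intro a ha y hy
            rcases Finset.mem_insert.mp ha with rfl | ha
            · have := hT2ge y hy; omega
            · have := hT1lt a ha; have := hT2ge y hy; omega
          have hcut := dp_le_cut_sets w (Finset.insert_nonempty _ _) hT2ne hU hO
          have hcard_ins : 2 ≤ (insert k T1).card := by
            rw [Finset.card_insert_of_notMem hkT1]
            have := Finset.card_pos.mpr hne
            omega
          have h_ins := dp_le_eqCand w hcard_ins (Finset.mem_insert_self k T1)
          rw [Finset.erase_insert hkT1] at h_ins
          have hWins : WS w (insert k T1) = w k + WS w T1 := Finset.sum_insert hkT1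
          have hWT2k : WS w T2 ≤ w k := by linarith
          have hbT1 : b ∈ T1 := by
            rcases Finset.mem_union.mp (hT12 ▸ hbT) with h | h
            · exact h
            · exfalso; have := single_le_WS hw h; linarith
          have hT2lt : ∀ y ∈ T2, w y < w b := by
            intro y hy
            have := single_le_WS hw hy
            linarith
          by_cases hcard1 : 2 ≤ T1.card
          · have hP2m := (ih T (Finset.erase_ssubset hk)).2.2
            have := hP2m c hc hne E2 b hbT1 hbmax1 hT2lt hcard1
            linarith
          · -- T1 = {b}
            have hT1b : T1 = {b} := by
              have : T1.card = 1 := by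
                have := Finset.card_pos.mpr ⟨b, hbT1⟩
                omega
              obtain ⟨y, hy⟩ := Finset.card_eq_one.mp this
              rw [hy] at hbT1 ⊢
              rw [Finset.mem_singleton] at hbT1
              rw [hbT1]
            have hA := dp_le_eqCand w (by omega) hbS
            have hbc : b < c := hT1lt b hbT1
            have hU2 : ({k} : Finset ℕ) ∪ T2 = S.erase b := by
              ext y
              rw [Finset.mem_union, Finset.mem_singleton, Finset.mem_erase]
              constructor
              · rintro (rfl | hy)
                · exact ⟨hbk.symm, hk⟩
                · have hyT : y ∈ T := (Finset.filter_subset _ _) hy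
                  have hyb : y ≠ b := by
                    intro hh; subst hh
                    have h1 := hT2ge y hy
                    have h2 := hT1lt y hbT1
                    omega
                  exact ⟨hyb, Finset.mem_of_mem_erase hyT⟩
              · rintro ⟨hyb, hyS⟩
                by_cases hyk : y = k
                · exact Or.inl hyk
                · right
                  have hyT : y ∈ T := Finset.mem_erase.mpr ⟨hyk, hyS⟩
                  rcases Finset.mem_union.mp (hT12 ▸ hyT) with h | h
                  · exfalso
                    rw [hT1b, Finset.mem_singleton] at h
                    exact hyb h
                  · exact h
            have hO2 : ∀ a ∈ ({k} : Finset ℕ), ∀ y ∈ T2, a < y := by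
              intro a ha y hy
              rw [Finset.mem_singleton] at ha; subst ha
              have := hT2ge y hy; omega
            have hB := dp_le_cut_sets w (Finset.singleton_nonempty k) hT2ne hU2 hO2
            have hWSb : WS w S = w b + WS w (S.erase b) := WS_erase w hbS
            have hDk : DP w ({k} : Finset ℕ) = 0 := dp_card_le_one w (by simp)
            have hDT1 : DP w T1 = 0 := by rw [hT1b]; exact dp_card_le_one w (by simp)
            have hWT1 : WS w T1 = w b := by rw [hT1b, WS, Finset.sum_singleton]
            linarith
        · -- k above the cut
          have hck : c ≤ k := by omega
          have hU : T1 ∪ insert k T2 = S := by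
            ext y
            simp only [Finset.mem_union, Finset.mem_insert]
            constructor
            · rintro (hy | rfl | hy)
              · exact Finset.mem_of_mem_erase ((Finset.filter_subset _ _) hy)
              · exact hk
              · exact Finset.mem_of_mem_erase ((Finset.filter_subset _ _) hy)
            · intro hyS
              by_cases hyk : y = k
              · exact Or.inr (Or.inl hyk)
              · have hyT : y ∈ T := Finset.mem_erase.mpr ⟨hyk, hyS⟩
                rcases Finset.mem_union.mp (hT12 ▸ hyT) with h | h
                · exact Or.inl h
                · exact Or.inr (Or.inr h)
          have hT1ne : T1.Nonempty := hne
          have hO : ∀ a ∈ T1, ∀ y ∈ insert k T2, a < y := by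
            intro a ha y hy
            have ha' := hT1lt a ha
            rcases Finset.mem_insert.mp hy with rfl | hy
            · omega
            · have := hT2ge y hy; omega
          have hcut := dp_le_cut_sets w hT1ne (Finset.insert_nonempty _ _) hU hO
          have hcard_ins : 2 ≤ (insert k T2).card := by
            rw [Finset.card_insert_of_notMem hkT2]
            have := Finset.card_pos.mpr hT2ne
            omega
          have h_ins := dp_le_eqCand w hcard_ins (Finset.mem_insert_self k T2)
          rw [Finset.erase_insert hkT2] at h_ins
          have hWins : WS w (insert k T2) = w k + WS w T2 := Finset.sum_insert hkT2
          have hWT1k : WS w T1 ≤ w k := by linarith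
          have hbT2 : b ∈ T2 := by
            rcases Finset.mem_union.mp (hT12 ▸ hbT) with h | h
            · exfalso; have := single_le_WS hw h; linarith
            · exact h
          have hT1lt' : ∀ y ∈ T1, w y < w b := by
            intro y hy
            have := single_le_WS hw hy
            linarith
          by_cases hcard2 : 2 ≤ T2.card
          · have hP2 := (ih T (Finset.erase_ssubset hk)).2.1
            have := hP2 c hc hne E2 b hbT2 hbmax2 hT1lt' hcard2
            linarith
          · -- T2 = {b}
            have hT2b : T2 = {b} := by
              have : T2.card = 1 := by
                have := Finset.card_pos.mpr ⟨b, hbT2⟩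
                omega
              obtain ⟨y, hy⟩ := Finset.card_eq_one.mp this
              rw [hy] at hbT2 ⊢
              rw [Finset.mem_singleton] at hbT2
              rw [hbT2]
            have hA := dp_le_eqCand w (by omega) hbS
            have hU2 : T1 ∪ ({k} : Finset ℕ) = S.erase b := by
              ext y
              rw [Finset.mem_union, Finset.mem_singleton, Finset.mem_erase]
              constructor
              · rintro (hy | rfl)
                · have hyb : y ≠ b := by
                    have := hT1lt y hy
                    have := hT2ge b hbT2
                    omega
                  exact ⟨hyb, Finset.mem_of_mem_erase ((Finset.filter_subset _ _) hy)⟩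
                · exact ⟨hbk.symm, hk⟩
              · rintro ⟨hyb, hyS⟩
                by_cases hyk : y = k
                · exact Or.inr hyk
                · left
                  have hyT : y ∈ T := Finset.mem_erase.mpr ⟨hyk, hyS⟩
                  rcases Finset.mem_union.mp (hT12 ▸ hyT) with h | h
                  · exact h
                  · exfalso
                    rw [hT2b, Finset.mem_singleton] at h
                    exact hyb h
            have hO2 : ∀ a ∈ T1, ∀ y ∈ ({k} : Finset ℕ), a < y := by
              intro a ha y hy
              rw [Finset.mem_singleton] at hy; subst hy
              have := hT1lt a ha; omega
            have hB := dp_le_cut_sets w hT1ne (Finset.singleton_nonempty k) hU2 hO2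
            have hWSb : WS w S = w b + WS w (S.erase b) := WS_erase w hbS
            have hDk : DP w ({k} : Finset ℕ) = 0 := dp_card_le_one w (by simp)
            have hDT2 : DP w T2 = 0 := by rw [hT2b]; exact dp_card_le_one w (by simp)
            have hWT2 : WS w T2 = w b := by rw [hT2b, WS, Finset.sum_singleton]
            linarith
    · -- P2
      intro c hcS hS1ne E b hbS2 hbmax2 hlt1 hcard2
      set S1 := S.filter (· < c) with hS1def
      set S2 := S.filter (fun x => ¬ x < c) with hS2def
      have hS12 : S1 ∪ S2 = S := Finset.filter_union_filter_not_eq _ S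
      have hWsplit : WS w S = WS w S1 + WS w S2 := WS_split w S c
      have hS1lt : ∀ y ∈ S1, y < c := fun y hy => (Finset.mem_filter.mp hy).2
      have hS2ge : ∀ y ∈ S2, c ≤ y := fun y hy => by
        have := (Finset.mem_filter.mp hy).2; omega
      have hbS : b ∈ S := (Finset.filter_subset _ _) hbS2
      have hS2sub : S2 ⊂ S := filter_ge_ssubset hS1ne
      have hcardsum : S1.card + S2.card = S.card :=
        Finset.card_filter_add_card_filter_not _
      have hcardS : 3 ≤ S.card := by
        have := Finset.card_pos.mpr hS1ne
        omega
      have hdisj12 : ∀ y ∈ S1, ∀ z ∈ S2, y < z := by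
        intro y hy z hz
        have := hS1lt y hy; have := hS2ge z hz; omega
      rcases dp_witness w hcard2 with ⟨j, hjS2, E2⟩ | ⟨c₂, hc₂, hne₂, E2⟩
      · -- S2 has eq-witness j
        have hjS : j ∈ S := (Finset.filter_subset _ _) hjS2
        by_cases hjb : w b ≤ w j
        · -- route j
          have hA := dp_le_eqCand w (by omega) hjS
          have hS2jne : (S2.erase j).Nonempty := Finset.card_pos.mp (by
            rw [Finset.card_erase_of_mem hjS2]; omega)
          have hU : S1 ∪ S2.erase j = S.erase j := by
            ext y
            rw [Finset.mem_union, Finset.mem_erase, Finset.mem_erase]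
            constructor
            · rintro (hy | ⟨hyj, hy⟩)
              · refine ⟨?_, (Finset.filter_subset _ _) hy⟩
                intro hh; subst hh
                have := hS1lt y hy; have := hS2ge y hjS2; omega
              · exact ⟨hyj, (Finset.filter_subset _ _) hy⟩
            · rintro ⟨hyj, hyS⟩
              rcases Finset.mem_union.mp (hS12 ▸ hyS) with h | h
              · exact Or.inl h
              · exact Or.inr ⟨hyj, h⟩
          have hO : ∀ y ∈ S1, ∀ z ∈ S2.erase j, y < z := fun y hy z hz =>
            hdisj12 y hy z (Finset.mem_of_mem_erase hz)
          have hB := dp_le_cut_sets w hS1ne hS2jne hU hO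
          have hWj : WS w S = w j + WS w (S.erase j) := WS_erase w hjS
          linarith
        · push_neg at hjb
          by_cases hc2j : 2 ≤ (S2.erase j).card
          · have hP1 := (ih S2 hS2sub).1
            have hcard3 : 3 ≤ S2.card := by
              rw [Finset.card_erase_of_mem hjS2] at hc2j; omega
            have := hP1 j hjS2 hcard3 E2 b hbS2
            linarith
          · -- S2.card = 2, route b
            have hcS2two : S2.card = 2 := by
              rw [Finset.card_erase_of_mem hjS2] at hc2j; omega
            have hDS2 : DP w S2 = WS w S2 := dp_card_two hw hcS2two
            have hA := dp_le_eqCand w (by omega) hbS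
            have hS2bne : (S2.erase b).Nonempty := Finset.card_pos.mp (by
              rw [Finset.card_erase_of_mem hbS2]; omega)
            have hU : S1 ∪ S2.erase b = S.erase b := by
              ext y
              rw [Finset.mem_union, Finset.mem_erase, Finset.mem_erase]
              constructor
              · rintro (hy | ⟨hyb, hy⟩)
                · refine ⟨?_, (Finset.filter_subset _ _) hy⟩
                  intro hh; subst hh
                  have := hS1lt y hy; have := hS2ge y hbS2; omega
                · exact ⟨hyb, (Finset.filter_subset _ _) hy⟩
              · rintro ⟨hyb, hyS⟩
                rcases Finset.mem_union.mp (hS12 ▸ hyS) with h | h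
                · exact Or.inl h
                · exact Or.inr ⟨hyb, h⟩
            have hO : ∀ y ∈ S1, ∀ z ∈ S2.erase b, y < z := fun y hy z hz =>
              hdisj12 y hy z (Finset.mem_of_mem_erase hz)
            have hB := dp_le_cut_sets w hS1ne hS2bne hU hO
            have hDS2b : DP w (S2.erase b) = 0 := dp_card_le_one w (by
              rw [Finset.card_erase_of_mem hbS2]; omega)
            have hWb : WS w S = w b + WS w (S.erase b) := WS_erase w hbS
            linarith
      · -- S2 has cut-witness at c₂
        set S21 := S2.filter (· < c₂) with hS21def
        set S22 := S2.filter (fun x => ¬ x < c₂) with hS22def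
        have hS2122 : S21 ∪ S22 = S2 := Finset.filter_union_filter_not_eq _ S2
        have hW2split : WS w S2 = WS w S21 + WS w S22 := WS_split w S2 c₂
        have hc₂S22 : c₂ ∈ S22 := by
          rw [hS22def, Finset.mem_filter]; exact ⟨hc₂, by omega⟩
        have hS22ne : S22.Nonempty := ⟨c₂, hc₂S22⟩
        have hS21lt : ∀ y ∈ S21, y < c₂ := fun y hy => (Finset.mem_filter.mp hy).2
        have hS22ge : ∀ y ∈ S22, c₂ ≤ y := fun y hy => by
          have := (Finset.mem_filter.mp hy).2; omega
        have hS21subS2 : S21 ⊆ S2 := Finset.filter_subset _ _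
        have hS22subS2 : S22 ⊆ S2 := Finset.filter_subset _ _
        have hU : (S1 ∪ S21) ∪ S22 = S := by
          rw [Finset.union_assoc, hS2122, hS12]
        have hO : ∀ y ∈ S1 ∪ S21, ∀ z ∈ S22, y < z := by
          intro y hy z hz
          rcases Finset.mem_union.mp hy with h | h
          · exact hdisj12 y h z (hS22subS2 hz)
          · have := hS21lt y h; have := hS22ge z hz; omega
        have hcut := dp_le_cut_sets w (Finset.Nonempty.inl hS1ne) hS22ne hU hO
        have hO2 : ∀ y ∈ S1, ∀ z ∈ S21, y < z := fun y hy z hz =>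
          hdisj12 y hy z (hS21subS2 hz)
        have hinner := dp_le_cut_sets w hS1ne hne₂ rfl hO2
        have hWinner : WS w (S1 ∪ S21) = WS w S1 + WS w S21 :=
          WS_union w (disjoint_of_ordered hO2)
        -- derive WS S22 ≤ WS S1
        have hkey : WS w S22 ≤ WS w S1 := by linarith
        by_contra hgoal
        push_neg at hgoal
        have hWS22b : WS w S22 < w b := lt_of_le_of_lt hkey hgoal
        have hbS21 : b ∈ S21 := by
          rcases Finset.mem_union.mp (hS2122 ▸ hbS2) with h | h
          · exact h
          · exfalso; have := single_le_WS hw h; linarith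
        have hltS22 : ∀ y ∈ S22, w y < w b := by
          intro y hy
          have := single_le_WS hw hy
          linarith
        by_cases hc21 : 2 ≤ S21.card
        · have hP2m := (ih S2 hS2sub).2.2
          have := hP2m c₂ hc₂ hne₂ E2 b hbS21 (fun y hy => hbmax2 y (hS21subS2 hy))
            hltS22 hc21
          linarith
        · -- S21 = {b}
          have hS21b : S21 = {b} := by
            have : S21.card = 1 := by
              have := Finset.card_pos.mpr ⟨b, hbS21⟩
              omega
            obtain ⟨y, hy⟩ := Finset.card_eq_one.mp this
            rw [hy] at hbS21 ⊢
            rw [Finset.mem_singleton] at hbS21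
            rw [hbS21]
          have hA := dp_le_eqCand w (by omega) hbS
          have hU2 : S1 ∪ S22 = S.erase b := by
            ext y
            rw [Finset.mem_union, Finset.mem_erase]
            constructor
            · rintro (hy | hy)
              · refine ⟨?_, (Finset.filter_subset _ _) hy⟩
                intro hh; subst hh
                have := hS1lt y hy; have := hS2ge y hbS2; omega
              · refine ⟨?_, (Finset.filter_subset _ _) (hS22subS2 hy)⟩
                intro hh; subst hh
                have := hS22ge y hy; have := hS21lt y hbS21; omega
            · rintro ⟨hyb, hyS⟩
              rcases Finset.mem_union.mp (hS12 ▸ hyS) with h | h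
              · exact Or.inl h
              · rcases Finset.mem_union.mp (hS2122 ▸ h) with h2 | h2
                · exfalso
                  rw [hS21b, Finset.mem_singleton] at h2
                  exact hyb h2
                · exact Or.inr h2
          have hO3 : ∀ y ∈ S1, ∀ z ∈ S22, y < z := fun y hy z hz =>
            hdisj12 y hy z (hS22subS2 hz)
          have hB := dp_le_cut_sets w hS1ne hS22ne hU2 hO3
          have hWb : WS w S = w b + WS w (S.erase b) := WS_erase w hbS
          have hDS21 : DP w S21 = 0 := by rw [hS21b]; exact dp_card_le_one w (by simp)
          have hWS21 : WS w S21 = w b := by rw [hS21b, WS, Finset.sum_singleton]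
          linarith
    · -- P2m
      intro c hcS hS1ne E b hbS1 hbmax1 hlt2 hcard1
      set S1 := S.filter (· < c) with hS1def
      set S2 := S.filter (fun x => ¬ x < c) with hS2def
      have hS12 : S1 ∪ S2 = S := Finset.filter_union_filter_not_eq _ S
      have hWsplit : WS w S = WS w S1 + WS w S2 := WS_split w S c
      have hS1lt : ∀ y ∈ S1, y < c := fun y hy => (Finset.mem_filter.mp hy).2
      have hS2ge : ∀ y ∈ S2, c ≤ y := fun y hy => by
        have := (Finset.mem_filter.mp hy).2; omega
      have hbS : b ∈ S := (Finset.filter_subset _ _) hbS1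
      have hcS2 : c ∈ S2 := by
        rw [hS2def, Finset.mem_filter]; exact ⟨hcS, by omega⟩
      have hS2ne : S2.Nonempty := ⟨c, hcS2⟩
      have hS1sub : S1 ⊂ S := filter_lt_ssubset hcS
      have hcardsum : S1.card + S2.card = S.card :=
        Finset.card_filter_add_card_filter_not _
      have hcardS : 3 ≤ S.card := by
        have := Finset.card_pos.mpr hS2ne
        omega
      have hdisj12 : ∀ y ∈ S1, ∀ z ∈ S2, y < z := by
        intro y hy z hz
        have := hS1lt y hy; have := hS2ge z hz; omega
      rcases dp_witness w hcard1 with ⟨j, hjS1, E2⟩ | ⟨c₁, hc₁, hne₁, E2⟩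
      · -- S1 has eq-witness j
        have hjS : j ∈ S := (Finset.filter_subset _ _) hjS1
        by_cases hjb : w b ≤ w j
        · -- route j
          have hA := dp_le_eqCand w (by omega) hjS
          have hS1jne : (S1.erase j).Nonempty := Finset.card_pos.mp (by
            rw [Finset.card_erase_of_mem hjS1]; omega)
          have hU : S1.erase j ∪ S2 = S.erase j := by
            ext y
            rw [Finset.mem_union, Finset.mem_erase, Finset.mem_erase]
            constructor
            · rintro (⟨hyj, hy⟩ | hy)
              · exact ⟨hyj, (Finset.filter_subset _ _) hy⟩
              · refine ⟨?_, (Finset.filter_subset _ _) hy⟩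
                intro hh; subst hh
                have := hS2ge y hy; have := hS1lt y hjS1; omega
            · rintro ⟨hyj, hyS⟩
              rcases Finset.mem_union.mp (hS12 ▸ hyS) with h | h
              · exact Or.inl ⟨hyj, h⟩
              · exact Or.inr h
          have hO : ∀ y ∈ S1.erase j, ∀ z ∈ S2, y < z := fun y hy z hz =>
            hdisj12 y (Finset.mem_of_mem_erase hy) z hz
          have hB := dp_le_cut_sets w hS1jne hS2ne hU hO
          have hWj : WS w S = w j + WS w (S.erase j) := WS_erase w hjS
          linarith
        · push_neg at hjb
          by_cases hc1j : 2 ≤ (S1.erase j).card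
          · have hP1 := (ih S1 hS1sub).1
            have hcard3 : 3 ≤ S1.card := by
              rw [Finset.card_erase_of_mem hjS1] at hc1j; omega
            have := hP1 j hjS1 hcard3 E2 b hbS1
            linarith
          · -- S1.card = 2, route b
            have hcS1two : S1.card = 2 := by
              rw [Finset.card_erase_of_mem hjS1] at hc1j; omega
            have hDS1 : DP w S1 = WS w S1 := dp_card_two hw hcS1two
            have hA := dp_le_eqCand w (by omega) hbS
            have hS1bne : (S1.erase b).Nonempty := Finset.card_pos.mp (by
              rw [Finset.card_erase_of_mem hbS1]; omega)
            have hU : S1.erase b ∪ S2 = S.erase b := by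
              ext y
              rw [Finset.mem_union, Finset.mem_erase, Finset.mem_erase]
              constructor
              · rintro (⟨hyb, hy⟩ | hy)
                · exact ⟨hyb, (Finset.filter_subset _ _) hy⟩
                · refine ⟨?_, (Finset.filter_subset _ _) hy⟩
                  intro hh; subst hh
                  have := hS2ge y hy; have := hS1lt y hbS1; omega
              · rintro ⟨hyb, hyS⟩
                rcases Finset.mem_union.mp (hS12 ▸ hyS) with h | h
                · exact Or.inl ⟨hyb, h⟩
                · exact Or.inr h
            have hO : ∀ y ∈ S1.erase b, ∀ z ∈ S2, y < z := fun y hy z hz =>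
              hdisj12 y (Finset.mem_of_mem_erase hy) z hz
            have hB := dp_le_cut_sets w hS1bne hS2ne hU hO
            have hDS1b : DP w (S1.erase b) = 0 := dp_card_le_one w (by
              rw [Finset.card_erase_of_mem hbS1]; omega)
            have hWb : WS w S = w b + WS w (S.erase b) := WS_erase w hbS
            linarith
      · -- S1 has cut-witness at c₁
        set S11 := S1.filter (· < c₁) with hS11def
        set S12 := S1.filter (fun x => ¬ x < c₁) with hS12def
        have hS1112 : S11 ∪ S12 = S1 := Finset.filter_union_filter_not_eq _ S1
        have hW1split : WS w S1 = WS w S11 + WS w S12 := WS_split w S1 c₁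
        have hc₁S12 : c₁ ∈ S12 := by
          rw [hS12def, Finset.mem_filter]; exact ⟨hc₁, by omega⟩
        have hS12ne : S12.Nonempty := ⟨c₁, hc₁S12⟩
        have hS11lt : ∀ y ∈ S11, y < c₁ := fun y hy => (Finset.mem_filter.mp hy).2
        have hS12ge : ∀ y ∈ S12, c₁ ≤ y := fun y hy => by
          have := (Finset.mem_filter.mp hy).2; omega
        have hS11subS1 : S11 ⊆ S1 := Finset.filter_subset _ _
        have hS12subS1 : S12 ⊆ S1 := Finset.filter_subset _ _
        have hU : S11 ∪ (S12 ∪ S2) = S := by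
          rw [← Finset.union_assoc, hS1112, hS12]
        have hO : ∀ y ∈ S11, ∀ z ∈ S12 ∪ S2, y < z := by
          intro y hy z hz
          rcases Finset.mem_union.mp hz with h | h
          · have := hS11lt y hy; have := hS12ge z h; omega
          · exact hdisj12 y (hS11subS1 hy) z h
        have hcut := dp_le_cut_sets w hne₁ (Finset.Nonempty.inl hS12ne) hU hO
        have hO2 : ∀ y ∈ S12, ∀ z ∈ S2, y < z := fun y hy z hz =>
          hdisj12 y (hS12subS1 hy) z hz
        have hinner := dp_le_cut_sets w hS12ne hS2ne rfl hO2
        have hWinner : WS w (S12 ∪ S2) = WS w S12 + WS w S2 :=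
          WS_union w (disjoint_of_ordered hO2)
        have hkey : WS w S11 ≤ WS w S2 := by linarith
        by_contra hgoal
        push_neg at hgoal
        have hWS11b : WS w S11 < w b := lt_of_le_of_lt hkey hgoal
        have hbS12 : b ∈ S12 := by
          rcases Finset.mem_union.mp (hS1112 ▸ hbS1) with h | h
          · exfalso; have := single_le_WS hw h; linarith
          · exact h
        have hltS11 : ∀ y ∈ S11, w y < w b := by
          intro y hy
          have := single_le_WS hw hy
          linarith
        by_cases hc12 : 2 ≤ S12.card
        · have hP2 := (ih S1 hS1sub).2.1
          have := hP2 c₁ hc₁ hne₁ E2 b hbS12 (fun y hy => hbmax1 y (hS12subS1 hy))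
            hltS11 hc12
          linarith
        · -- S12 = {b}
          have hS12b : S12 = {b} := by
            have : S12.card = 1 := by
              have := Finset.card_pos.mpr ⟨b, hbS12⟩
              omega
            obtain ⟨y, hy⟩ := Finset.card_eq_one.mp this
            rw [hy] at hbS12 ⊢
            rw [Finset.mem_singleton] at hbS12
            rw [hbS12]
          have hA := dp_le_eqCand w (by omega) hbS
          have hU2 : S11 ∪ S2 = S.erase b := by
            ext y
            rw [Finset.mem_union, Finset.mem_erase]
            constructor
            · rintro (hy | hy)
              · refine ⟨?_, (Finset.filter_subset _ _) (hS11subS1 hy)⟩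
                intro hh; subst hh
                have := hS11lt y hy; have := hS12ge y hbS12; omega
              · refine ⟨?_, (Finset.filter_subset _ _) hy⟩
                intro hh; subst hh
                have := hS2ge y hy; have := hS1lt y hbS1; omega
            · rintro ⟨hyb, hyS⟩
              rcases Finset.mem_union.mp (hS12 ▸ hyS) with h | h
              · rcases Finset.mem_union.mp (hS1112 ▸ h) with h2 | h2
                · exact Or.inl h2
                · exfalso
                  rw [hS12b, Finset.mem_singleton] at h2
                  exact hyb h2
              · exact Or.inr h
          have hO3 : ∀ y ∈ S11, ∀ z ∈ S2, y < z := fun y hy z hz =>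
            hdisj12 y (hS11subS1 hy) z hz
          have hB := dp_le_cut_sets w hne₁ hS2ne hU2 hO3
          have hWb : WS w S = w b + WS w (S.erase b) := WS_erase w hbS
          have hDS12 : DP w S12 = 0 := by rw [hS12b]; exact dp_card_le_one w (by simp)
          have hWS12 : WS w S12 = w b := by rw [hS12b, WS, Finset.sum_singleton]
          linarith
end

section
variable {w : ℕ → ℝ}

/-- Lemma A: appending a set `M` above `L` (with a designated max-weight key `b` of `L`). -/
lemma lemmaA (hw : ∀ k, 0 ≤ w k) {L M : Finset ℕ} {b : ℕ}
    (hL2 : 2 ≤ L.card) (hMne : M.Nonempty)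
    (hLM : ∀ x ∈ L, ∀ y ∈ M, x < y)
    (hb : b ∈ L) (hbmax : ∀ x ∈ L, w x ≤ w b) :
    DP w (L ∪ M) ≤ DP w L + WS w L + 2 * WS w M - w b + DP w M := by
  have hLsubU : L ⊆ L ∪ M := Finset.subset_union_left
  have hcardU : 2 ≤ (L ∪ M).card := le_trans hL2 (Finset.card_le_card hLsubU)
  have hdisj : Disjoint L M := disjoint_of_ordered hLM
  have hWU : WS w (L ∪ M) = WS w L + WS w M := WS_union w hdisj
  rcases dp_witness w hL2 with ⟨k, hkL, E⟩ | ⟨c, hcL, hne, E⟩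
  · -- eq witness k of L
    have hkM : k ∉ M := fun h => absurd (hLM k hkL k h) (lt_irrefl k)
    by_cases hbk : w b ≤ w k
    · -- chain: eq-k then cut (L\k | M)
      have h1 := dp_le_eqCand w hcardU (Finset.mem_union_left M hkL)
      have hEU : (L ∪ M).erase k = (L.erase k) ∪ M := by
        rw [Finset.erase_union_distrib, Finset.erase_eq_of_notMem hkM]
      have hLkne : (L.erase k).Nonempty := Finset.card_pos.mp (by
        rw [Finset.card_erase_of_mem hkL]; omega)
      have h2 := dp_le_cut_sets w hLkne hMne rfl
        (fun x hx y hy => hLM x (Finset.mem_of_mem_erase hx) y hy)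
      have hWLk : WS w L = w k + WS w (L.erase k) := WS_erase w hkL
      have hWEU : WS w ((L.erase k) ∪ M) = WS w (L.erase k) + WS w M :=
        WS_union w (disjoint_of_ordered (fun x hx y hy => hLM x (Finset.mem_of_mem_erase hx) y hy))
      rw [hEU] at h1
      linarith
    · push_neg at hbk
      -- k is not max: L.card = 2 and L = {k, b}
      have hcL2 : L.card = 2 := by
        by_contra hc3
        have h3 : 3 ≤ L.card := by omega
        have := ((pack hw L).1) k hkL h3 E b hb
        linarith
      have hbk' : b ≠ k := fun h => by rw [h] at hbk; exact absurd hbk (lt_irrefl _)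
      have hLke : L.erase k = {b} := by
        have hcc : (L.erase k).card = 1 := by rw [Finset.card_erase_of_mem hkL]; omega
        obtain ⟨y, hy⟩ := Finset.card_eq_one.mp hcc
        have : b ∈ L.erase k := Finset.mem_erase.mpr ⟨hbk', hb⟩
        rw [hy] at this ⊢
        rw [Finset.mem_singleton] at this
        rw [this]
      have hLbe : L.erase b = {k} := by
        have hcc : (L.erase b).card = 1 := by rw [Finset.card_erase_of_mem hb]; omega
        obtain ⟨y, hy⟩ := Finset.card_eq_one.mp hcc
        have : k ∈ L.erase b := Finset.mem_erase.mpr ⟨fun h => hbk' h.symm, hkL⟩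
        rw [hy] at this ⊢
        rw [Finset.mem_singleton] at this
        rw [this]
      have hbM : b ∉ M := fun h => absurd (hLM b hb b h) (lt_irrefl b)
      have h1 := dp_le_eqCand w hcardU (Finset.mem_union_left M hb)
      have hEU : (L ∪ M).erase b = ({k} : Finset ℕ) ∪ M := by
        rw [Finset.erase_union_distrib, Finset.erase_eq_of_notMem hbM, hLbe]
      have h2 := dp_le_cut_sets w (Finset.singleton_nonempty k) hMne rfl
        (by
          intro x hx y hy
          rw [Finset.mem_singleton] at hx; subst hx
          exact hLM x hkL y hy)
      have hWsing : WS w (({k} : Finset ℕ) ∪ M) = w k + WS w M := by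
        rw [WS_union w (disjoint_of_ordered (by
          intro x hx y hy
          rw [Finset.mem_singleton] at hx; subst hx
          exact hLM x hkL y hy)), WS, Finset.sum_singleton]
      have hDk : DP w ({k} : Finset ℕ) = 0 := dp_card_le_one w (by simp)
      have hDLk : DP w (L.erase k) = 0 := by rw [hLke]; exact dp_card_le_one w (by simp)
      have hWLk : WS w L = w k + WS w (L.erase k) := WS_erase w hkL
      have hWLkb : WS w (L.erase k) = w b := by rw [hLke, WS, Finset.sum_singleton]
      rw [hEU] at h1
      linarith
  · -- cut witness of L at c
    set L1 := L.filter (· < c) with hL1def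
    set L2 := L.filter (fun x => ¬ x < c) with hL2def
    have hL12 : L1 ∪ L2 = L := Finset.filter_union_filter_not_eq _ L
    have hW12 : WS w L = WS w L1 + WS w L2 := WS_split w L c
    have hL1lt : ∀ y ∈ L1, y < c := fun y hy => (Finset.mem_filter.mp hy).2
    have hL2ge : ∀ y ∈ L2, c ≤ y := fun y hy => by
      have := (Finset.mem_filter.mp hy).2; omega
    have hcL2mem : c ∈ L2 := by
      rw [hL2def, Finset.mem_filter]; exact ⟨hcL, by omega⟩
    have hL2ne : L2.Nonempty := ⟨c, hcL2mem⟩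
    have hL1sub : L1 ⊆ L := Finset.filter_subset _ _
    have hL2sub : L2 ⊆ L := Finset.filter_subset _ _
    have hO12 : ∀ y ∈ L1, ∀ z ∈ L2, y < z := by
      intro y hy z hz
      have := hL1lt y hy; have := hL2ge z hz; omega
    by_cases hWL1 : w b ≤ WS w L1
    · -- detach chain
      have hU : L1 ∪ (L2 ∪ M) = L ∪ M := by rw [← Finset.union_assoc, hL12]
      have hO : ∀ y ∈ L1, ∀ z ∈ L2 ∪ M, y < z := by
        intro y hy z hz
        rcases Finset.mem_union.mp hz with h | h
        · exact hO12 y hy z h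
        · exact hLM y (hL1sub hy) z h
      have h1 := dp_le_cut_sets w hne (Finset.Nonempty.inl hL2ne) hU hO
      have hO2 : ∀ y ∈ L2, ∀ z ∈ M, y < z := fun y hy z hz => hLM y (hL2sub hy) z hz
      have h2 := dp_le_cut_sets w hL2ne hMne rfl hO2
      have hWin : WS w (L2 ∪ M) = WS w L2 + WS w M := WS_union w (disjoint_of_ordered hO2)
      linarith
    · push_neg at hWL1
      have hbL2 : b ∈ L2 := by
        rcases Finset.mem_union.mp (hL12 ▸ hb) with h | h
        · exfalso; have := single_le_WS hw h; linarith
        · exact h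
      have hltL1 : ∀ x ∈ L1, w x < w b := by
        intro x hx
        have := single_le_WS hw hx
        linarith
      have hL2card : L2.card = 1 := by
        by_contra hc2
        have h2 : 2 ≤ L2.card := by
          have := Finset.card_pos.mpr hL2ne
          omega
        have := ((pack hw L).2.1) c hcL hne E b hbL2
          (fun x hx => hbmax x (hL2sub hx)) hltL1 h2
        linarith
      have hL2b : L2 = {b} := by
        obtain ⟨y, hy⟩ := Finset.card_eq_one.mp hL2card
        rw [hy] at hbL2 ⊢
        rw [Finset.mem_singleton] at hbL2
        rw [hbL2]
      have hbM : b ∉ M := fun h => absurd (hLM b hb b h) (lt_irrefl b)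
      have hLbe : L.erase b = L1 := by
        ext y
        rw [Finset.mem_erase]
        constructor
        · rintro ⟨hyb, hyL⟩
          rcases Finset.mem_union.mp (hL12 ▸ hyL) with h | h
          · exact h
          · exfalso; rw [hL2b, Finset.mem_singleton] at h; exact hyb h
        · intro hy
          refine ⟨?_, hL1sub hy⟩
          intro hh; subst hh
          have := hL1lt y hy
          have := hL2ge y hbL2
          omega
      have h1 := dp_le_eqCand w hcardU (Finset.mem_union_left M hb)
      have hEU : (L ∪ M).erase b = L1 ∪ M := by
        rw [Finset.erase_union_distrib, Finset.erase_eq_of_notMem hbM, hLbe]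
      have hO2 : ∀ y ∈ L1, ∀ z ∈ M, y < z := fun y hy z hz => hLM y (hL1sub hy) z hz
      have h2 := dp_le_cut_sets w hne hMne rfl hO2
      have hWin : WS w (L1 ∪ M) = WS w L1 + WS w M := WS_union w (disjoint_of_ordered hO2)
      have hDL2 : DP w L2 = 0 := by rw [hL2b]; exact dp_card_le_one w (by simp)
      have hWL2 : WS w L2 = w b := by rw [hL2b, WS, Finset.sum_singleton]
      rw [hEU] at h1
      linarith

/-- Lemma A mirrored: appending a set `M` below `L`. -/
lemma lemmaAm (hw : ∀ k, 0 ≤ w k) {L M : Finset ℕ} {b : ℕ}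
    (hL2 : 2 ≤ L.card) (hMne : M.Nonempty)
    (hML : ∀ y ∈ M, ∀ x ∈ L, y < x)
    (hb : b ∈ L) (hbmax : ∀ x ∈ L, w x ≤ w b) :
    DP w (M ∪ L) ≤ DP w L + WS w L + 2 * WS w M - w b + DP w M := by
  have hLsubU : L ⊆ M ∪ L := Finset.subset_union_right
  have hcardU : 2 ≤ (M ∪ L).card := le_trans hL2 (Finset.card_le_card hLsubU)
  have hdisj : Disjoint M L := disjoint_of_ordered hML
  have hWU : WS w (M ∪ L) = WS w M + WS w L := WS_union w hdisj
  rcases dp_witness w hL2 with ⟨k, hkL, E⟩ | ⟨c, hcL, hne, E⟩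
  · -- eq witness k of L
    have hkM : k ∉ M := fun h => absurd (hML k h k hkL) (lt_irrefl k)
    by_cases hbk : w b ≤ w k
    · have h1 := dp_le_eqCand w hcardU (Finset.mem_union_right M hkL)
      have hEU : (M ∪ L).erase k = M ∪ (L.erase k) := by
        rw [Finset.erase_union_distrib, Finset.erase_eq_of_notMem hkM]
      have hLkne : (L.erase k).Nonempty := Finset.card_pos.mp (by
        rw [Finset.card_erase_of_mem hkL]; omega)
      have hOm : ∀ y ∈ M, ∀ x ∈ L.erase k, y < x := fun y hy x hx =>
        hML y hy x (Finset.mem_of_mem_erase hx)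
      have h2 := dp_le_cut_sets w hMne hLkne rfl hOm
      have hWLk : WS w L = w k + WS w (L.erase k) := WS_erase w hkL
      have hWEU : WS w (M ∪ (L.erase k)) = WS w M + WS w (L.erase k) :=
        WS_union w (disjoint_of_ordered hOm)
      rw [hEU] at h1
      linarith
    · push_neg at hbk
      have hcL2 : L.card = 2 := by
        by_contra hc3
        have h3 : 3 ≤ L.card := by omega
        have := ((pack hw L).1) k hkL h3 E b hb
        linarith
      have hbk' : b ≠ k := fun h => by rw [h] at hbk; exact absurd hbk (lt_irrefl _)
      have hLke : L.erase k = {b} := by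
        have hcc : (L.erase k).card = 1 := by rw [Finset.card_erase_of_mem hkL]; omega
        obtain ⟨y, hy⟩ := Finset.card_eq_one.mp hcc
        have : b ∈ L.erase k := Finset.mem_erase.mpr ⟨hbk', hb⟩
        rw [hy] at this ⊢
        rw [Finset.mem_singleton] at this
        rw [this]
      have hLbe : L.erase b = {k} := by
        have hcc : (L.erase b).card = 1 := by rw [Finset.card_erase_of_mem hb]; omega
        obtain ⟨y, hy⟩ := Finset.card_eq_one.mp hcc
        have : k ∈ L.erase b := Finset.mem_erase.mpr ⟨fun h => hbk' h.symm, hkL⟩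
        rw [hy] at this ⊢
        rw [Finset.mem_singleton] at this
        rw [this]
      have hbM : b ∉ M := fun h => absurd (hML b h b hb) (lt_irrefl b)
      have h1 := dp_le_eqCand w hcardU (Finset.mem_union_right M hb)
      have hEU : (M ∪ L).erase b = M ∪ ({k} : Finset ℕ) := by
        rw [Finset.erase_union_distrib, Finset.erase_eq_of_notMem hbM, hLbe]
      have hOm : ∀ y ∈ M, ∀ x ∈ ({k} : Finset ℕ), y < x := by
        intro y hy x hx
        rw [Finset.mem_singleton] at hx; subst hx
        exact hML y hy x hkL
      have h2 := dp_le_cut_sets w hMne (Finset.singleton_nonempty k) rfl hOm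
      have hWsing : WS w (M ∪ ({k} : Finset ℕ)) = WS w M + w k := by
        rw [WS_union w (disjoint_of_ordered hOm), WS, WS, Finset.sum_singleton]
      have hDk : DP w ({k} : Finset ℕ) = 0 := dp_card_le_one w (by simp)
      have hDLk : DP w (L.erase k) = 0 := by rw [hLke]; exact dp_card_le_one w (by simp)
      have hWLk : WS w L = w k + WS w (L.erase k) := WS_erase w hkL
      have hWLkb : WS w (L.erase k) = w b := by rw [hLke, WS, Finset.sum_singleton]
      rw [hEU] at h1
      linarith
  · -- cut witness of L at c
    set L1 := L.filter (· < c) with hL1def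
    set L2 := L.filter (fun x => ¬ x < c) with hL2def
    have hL12 : L1 ∪ L2 = L := Finset.filter_union_filter_not_eq _ L
    have hW12 : WS w L = WS w L1 + WS w L2 := WS_split w L c
    have hL1lt : ∀ y ∈ L1, y < c := fun y hy => (Finset.mem_filter.mp hy).2
    have hL2ge : ∀ y ∈ L2, c ≤ y := fun y hy => by
      have := (Finset.mem_filter.mp hy).2; omega
    have hcL2mem : c ∈ L2 := by
      rw [hL2def, Finset.mem_filter]; exact ⟨hcL, by omega⟩
    have hL2ne : L2.Nonempty := ⟨c, hcL2mem⟩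
    have hL1sub : L1 ⊆ L := Finset.filter_subset _ _
    have hL2sub : L2 ⊆ L := Finset.filter_subset _ _
    have hO12 : ∀ y ∈ L1, ∀ z ∈ L2, y < z := by
      intro y hy z hz
      have := hL1lt y hy; have := hL2ge z hz; omega
    by_cases hWL2 : w b ≤ WS w L2
    · -- detach chain
      have hU : (M ∪ L1) ∪ L2 = M ∪ L := by rw [Finset.union_assoc, hL12]
      have hO : ∀ y ∈ M ∪ L1, ∀ z ∈ L2, y < z := by
        intro y hy z hz
        rcases Finset.mem_union.mp hy with h | h
        · exact hML y h z (hL2sub hz)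
        · exact hO12 y h z hz
      have h1 := dp_le_cut_sets w (Finset.Nonempty.inr hne) hL2ne hU hO
      have hO2 : ∀ y ∈ M, ∀ z ∈ L1, y < z := fun y hy z hz => hML y hy z (hL1sub hz)
      have h2 := dp_le_cut_sets w hMne hne rfl hO2
      have hWin : WS w (M ∪ L1) = WS w M + WS w L1 := WS_union w (disjoint_of_ordered hO2)
      linarith
    · push_neg at hWL2
      have hbL1 : b ∈ L1 := by
        rcases Finset.mem_union.mp (hL12 ▸ hb) with h | h
        · exact h
        · exfalso; have := single_le_WS hw h; linarith
      have hltL2 : ∀ x ∈ L2, w x < w b := by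
        intro x hx
        have := single_le_WS hw hx
        linarith
      have hL1card : L1.card = 1 := by
        by_contra hc1
        have h2 : 2 ≤ L1.card := by
          have := Finset.card_pos.mpr hne
          omega
        have := ((pack hw L).2.2) c hcL hne E b hbL1
          (fun x hx => hbmax x (hL1sub hx)) hltL2 h2
        linarith
      have hL1b : L1 = {b} := by
        obtain ⟨y, hy⟩ := Finset.card_eq_one.mp hL1card
        rw [hy] at hbL1 ⊢
        rw [Finset.mem_singleton] at hbL1
        rw [hbL1]
      have hbM : b ∉ M := fun h => absurd (hML b h b hb) (lt_irrefl b)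
      have hLbe : L.erase b = L2 := by
        ext y
        rw [Finset.mem_erase]
        constructor
        · rintro ⟨hyb, hyL⟩
          rcases Finset.mem_union.mp (hL12 ▸ hyL) with h | h
          · exfalso; rw [hL1b, Finset.mem_singleton] at h; exact hyb h
          · exact h
        · intro hy
          refine ⟨?_, hL2sub hy⟩
          intro hh; subst hh
          have := hL2ge y hy
          have := hL1lt y hbL1
          omega
      have h1 := dp_le_eqCand w hcardU (Finset.mem_union_right M hb)
      have hEU : (M ∪ L).erase b = M ∪ L2 := by
        rw [Finset.erase_union_distrib, Finset.erase_eq_of_notMem hbM, hLbe]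
      have hO2 : ∀ y ∈ M, ∀ z ∈ L2, y < z := fun y hy z hz => hML y hy z (hL2sub hz)
      have h2 := dp_le_cut_sets w hMne hL2ne rfl hO2
      have hWin : WS w (M ∪ L2) = WS w M + WS w L2 := WS_union w (disjoint_of_ordered hO2)
      have hDL1 : DP w L1 = 0 := by rw [hL1b]; exact dp_card_le_one w (by simp)
      have hWL1 : WS w L1 = w b := by rw [hL1b, WS, Finset.sum_singleton]
      rw [hEU] at h1
      linarith
end

section
variable {w : ℕ → ℝ}

lemma WS_mono (hw : ∀ k, 0 ≤ w k) {A B : Finset ℕ} (h : A ⊆ B) : WS w A ≤ WS w B :=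
  Finset.sum_le_sum_of_subset_of_nonneg h (fun k _ _ => hw k)

/-- MAIN: for heavy instances, the equality test on a maximum-weight key is optimal. -/
lemma main_heavy (hw : ∀ k, 0 ≤ w k) (S : Finset ℕ) :
    ∀ a ∈ S, (∀ x ∈ S, w x ≤ w a) →
    (∃ b ∈ S.erase a, (∀ x ∈ S.erase a, w x ≤ w b) ∧ WS w S ≤ 2 * w a + w b) →
    2 ≤ S.card →
    WS w S + DP w (S.erase a) ≤ DP w S := by
  induction S using Finset.strongInduction with
  | _ S ih =>
    intro a ha hamax hheavy h2
    obtain ⟨b, hbSa, hbmax, hheavyW⟩ := hheavy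
    have hbS : b ∈ S := Finset.mem_of_mem_erase hbSa
    have hba : b ≠ a := (Finset.mem_erase.mp hbSa).1
    rcases dp_witness w h2 with ⟨k, hkS, E⟩ | ⟨c, hcS, hne, E⟩
    · -- eq witness k
      by_cases hka : k = a
      · subst hka
        exact le_of_eq E.symm
      · by_cases hcard : 2 ≤ (S.erase k).card
        · -- IH on S.erase k
          have haek : a ∈ S.erase k := Finset.mem_erase.mpr ⟨fun h => hka h.symm, ha⟩
          have hamax' : ∀ x ∈ S.erase k, w x ≤ w a := fun x hx =>
            hamax x (Finset.mem_of_mem_erase hx)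
          have hset : (S.erase k).erase a = (S.erase a).erase k := Finset.erase_right_comm
          have h3S : 3 ≤ S.card := by
            have hh := Finset.card_erase_of_mem hkS
            omega
          have hMne : ((S.erase k).erase a).Nonempty := by
            apply Finset.card_pos.mp
            rw [Finset.card_erase_of_mem haek, Finset.card_erase_of_mem hkS]
            omega
          obtain ⟨b', hb', hb'max⟩ := ((S.erase k).erase a).exists_max_image w hMne
          have hWk : WS w S = w k + WS w (S.erase k) := WS_erase w hkS
          have hbb' : w b - w k ≤ w b' := by
            by_cases hbk : b = k
            · subst hbk
              have := hw b
              have := hw b'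
              linarith
            · have hbmem : b ∈ (S.erase k).erase a := by
                rw [hset]
                exact Finset.mem_erase.mpr ⟨hbk, hbSa⟩
              have := hb'max b hbmem
              have := hw k
              linarith
          have hheavy' : WS w (S.erase k) ≤ 2 * w a + w b' := by linarith
          have hIH := ih (S.erase k) (Finset.erase_ssubset hkS) a haek hamax'
            ⟨b', hb', hb'max, hheavy'⟩ hcard
          -- candidate for S.erase a
          have hkSa : k ∈ S.erase a := Finset.mem_erase.mpr ⟨hka, hkS⟩
          have hcarda : 2 ≤ (S.erase a).card := by
            rw [Finset.card_erase_of_mem ha]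
            omega
          have hcand := dp_le_eqCand w hcarda hkSa
          rw [show (S.erase a).erase k = (S.erase k).erase a from Finset.erase_right_comm] at hcand
          have hWa : WS w S = w a + WS w (S.erase a) := WS_erase w ha
          have hWk' : WS w (S.erase k) = WS w S - w k := by linarith
          have hkla : w k ≤ w a := hamax k hkS
          linarith
        · -- S = {k, a}
          have hcS2 : S.card = 2 := by
            have := Finset.card_erase_of_mem hkS
            omega
          have hDSa : DP w (S.erase a) = 0 := dp_card_le_one w (by
            rw [Finset.card_erase_of_mem ha]; omega)
          have hDSk : DP w (S.erase k) = 0 := dp_card_le_one w (by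
            rw [Finset.card_erase_of_mem hkS]; omega)
          rw [hDSa]
          linarith
    · -- cut witness at c
      set S1 := S.filter (· < c) with hS1def
      set S2 := S.filter (fun x => ¬ x < c) with hS2def
      have hS12 : S1 ∪ S2 = S := Finset.filter_union_filter_not_eq _ S
      have hWsplit : WS w S = WS w S1 + WS w S2 := WS_split w S c
      have hS1lt : ∀ y ∈ S1, y < c := fun y hy => (Finset.mem_filter.mp hy).2
      have hS2ge : ∀ y ∈ S2, c ≤ y := fun y hy => by
        have := (Finset.mem_filter.mp hy).2; omega
      have hcS2mem : c ∈ S2 := by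
        rw [hS2def, Finset.mem_filter]; exact ⟨hcS, by omega⟩
      have hS2ne : S2.Nonempty := ⟨c, hcS2mem⟩
      have hS1sub : S1 ⊆ S := Finset.filter_subset _ _
      have hS2sub : S2 ⊆ S := Finset.filter_subset _ _
      have hO12 : ∀ y ∈ S1, ∀ z ∈ S2, y < z := by
        intro y hy z hz
        have := hS1lt y hy; have := hS2ge z hz; omega
      by_cases halt : a < c
      · -- a ∈ S1 (mirror case)
        have haS1 : a ∈ S1 := by rw [hS1def, Finset.mem_filter]; exact ⟨ha, halt⟩
        by_cases hcard1 : 2 ≤ S1.card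
        · set M := S1.erase a with hMdef
          have hMne : M.Nonempty := Finset.card_pos.mp (by
            rw [hMdef, Finset.card_erase_of_mem haS1]; omega)
          have hSa : S.erase a = M ∪ S2 := by
            ext y
            rw [Finset.mem_erase, Finset.mem_union, hMdef, Finset.mem_erase]
            constructor
            · rintro ⟨hya, hyS⟩
              rcases Finset.mem_union.mp (hS12 ▸ hyS) with h | h
              · exact Or.inl ⟨hya, h⟩
              · exact Or.inr h
            · rintro (⟨hya, hy⟩ | hy)
              · exact ⟨hya, hS1sub hy⟩
              · refine ⟨?_, hS2sub hy⟩
                intro hh; subst hh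
                have := hS2ge y hy; omega
          have hMsub1 : M ⊆ S1 := Finset.erase_subset _ _
          have hOm : ∀ y ∈ M, ∀ z ∈ S2, y < z := fun y hy z hz =>
            hO12 y (hMsub1 hy) z hz
          -- IH on S1
          obtain ⟨b₁, hb₁, hb₁max⟩ := M.exists_max_image w hMne
          have hheavy1 : WS w S1 ≤ 2 * w a + w b₁ := by
            by_cases hbM : b ∈ M
            · have h1 : WS w S1 ≤ WS w S := WS_mono hw hS1sub
              have := hb₁max b hbM
              linarith
            · -- b ∈ S2
              have hbS2 : b ∈ S2 := by
                rcases Finset.mem_union.mp (hS12 ▸ hbS) with h | h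
                · exfalso
                  exact hbM (by rw [hMdef]; exact Finset.mem_erase.mpr ⟨hba, h⟩)
                · exact h
              have h1 := single_le_WS hw hbS2
              have := hw b₁
              linarith
          have hIH := ih S1 (filter_lt_ssubset hcS) a haS1
            (fun x hx => hamax x (hS1sub hx)) ⟨b₁, hb₁, hb₁max, hheavy1⟩ hcard1
          rw [← hMdef] at hIH
          rw [hSa]
          by_cases hWS2a : WS w S2 ≤ w a
          · have hcut := dp_le_cut_sets w hMne hS2ne rfl hOm
            have hWun : WS w (M ∪ S2) = WS w M + WS w S2 :=
              WS_union w (disjoint_of_ordered hOm)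
            have hWM : WS w S1 = w a + WS w M := WS_erase w haS1
            linarith
          · push_neg at hWS2a
            have hbS2 : b ∈ S2 := by
              rcases Finset.mem_union.mp (hS12 ▸ hbS) with h | h
              · exfalso
                have hWM : WS w S1 = w a + WS w M := WS_erase w haS1
                have hwbM : w b ≤ WS w M := single_le_WS hw (Finset.mem_erase.mpr ⟨hba, h⟩)
                linarith
              · exact h
            have hcard2 : 2 ≤ S2.card := by
              by_contra hc
              have hc1 : S2.card = 1 := by
                have := Finset.card_pos.mpr hS2ne; omega
              obtain ⟨y, hy⟩ := Finset.card_eq_one.mp hc1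
              have hyS2 : y ∈ S2 := by rw [hy]; exact Finset.mem_singleton_self y
              have : WS w S2 = w y := by rw [hy, WS, Finset.sum_singleton]
              have := hamax y (hS2sub hyS2)
              linarith
            have hbmax2 : ∀ x ∈ S2, w x ≤ w b := by
              intro x hx
              refine hbmax x (Finset.mem_erase.mpr ⟨?_, hS2sub hx⟩)
              intro hh; subst hh
              have := hS2ge x hx; omega
            have hAm := lemmaAm hw hcard2 hMne hOm hbS2 hbmax2
            have hWM : WS w S1 = w a + WS w M := WS_erase w haS1
            linarith
        · -- S1 = {a}
          have hS1a : S1 = {a} := by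
            have : S1.card = 1 := by
              have := Finset.card_pos.mpr ⟨a, haS1⟩; omega
            obtain ⟨y, hy⟩ := Finset.card_eq_one.mp this
            rw [hy] at haS1 ⊢
            rw [Finset.mem_singleton] at haS1
            rw [haS1]
          have hSa : S.erase a = S2 := by
            ext y
            rw [Finset.mem_erase]
            constructor
            · rintro ⟨hya, hyS⟩
              rcases Finset.mem_union.mp (hS12 ▸ hyS) with h | h
              · exfalso; rw [hS1a, Finset.mem_singleton] at h; exact hya h
              · exact h
            · intro hy
              refine ⟨?_, hS2sub hy⟩
              intro hh; subst hh
              have := hS2ge y hy; omega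
          have hDS1 : DP w S1 = 0 := by rw [hS1a]; exact dp_card_le_one w (by simp)
          rw [hSa]
          have := dp_nonneg hw S2
          linarith
      · -- a ∈ S2
        have haS2 : a ∈ S2 := by
          rw [hS2def, Finset.mem_filter]; exact ⟨ha, halt⟩
        by_cases hcard2 : 2 ≤ S2.card
        · set M := S2.erase a with hMdef
          have hMne : M.Nonempty := Finset.card_pos.mp (by
            rw [hMdef, Finset.card_erase_of_mem haS2]; omega)
          have hSa : S.erase a = S1 ∪ M := by
            ext y
            rw [Finset.mem_erase, Finset.mem_union, hMdef, Finset.mem_erase]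
            constructor
            · rintro ⟨hya, hyS⟩
              rcases Finset.mem_union.mp (hS12 ▸ hyS) with h | h
              · exact Or.inl h
              · exact Or.inr ⟨hya, h⟩
            · rintro (hy | ⟨hya, hy⟩)
              · refine ⟨?_, hS1sub hy⟩
                intro hh; subst hh
                have := hS1lt y hy; omega
              · exact ⟨hya, hS2sub hy⟩
          have hMsub2 : M ⊆ S2 := Finset.erase_subset _ _
          have hOm : ∀ y ∈ S1, ∀ z ∈ M, y < z := fun y hy z hz =>
            hO12 y hy z (hMsub2 hz)
          obtain ⟨b₂, hb₂, hb₂max⟩ := M.exists_max_image w hMne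
          have hheavy2 : WS w S2 ≤ 2 * w a + w b₂ := by
            by_cases hbM : b ∈ M
            · have h1 : WS w S2 ≤ WS w S := WS_mono hw hS2sub
              have := hb₂max b hbM
              linarith
            · have hbS1 : b ∈ S1 := by
                rcases Finset.mem_union.mp (hS12 ▸ hbS) with h | h
                · exact h
                · exact absurd (by rw [hMdef]; exact Finset.mem_erase.mpr ⟨hba, h⟩) hbM
              have h1 := single_le_WS hw hbS1
              have := hw b₂
              linarith
          have hIH := ih S2 (filter_ge_ssubset hne) a haS2
            (fun x hx => hamax x (hS2sub hx)) ⟨b₂, hb₂, hb₂max, hheavy2⟩ hcard2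
          rw [← hMdef] at hIH
          rw [hSa]
          by_cases hWS1a : WS w S1 ≤ w a
          · have hcut := dp_le_cut_sets w hne hMne rfl hOm
            have hWun : WS w (S1 ∪ M) = WS w S1 + WS w M :=
              WS_union w (disjoint_of_ordered hOm)
            have hWM : WS w S2 = w a + WS w M := WS_erase w haS2
            linarith
          · push_neg at hWS1a
            have hbS1 : b ∈ S1 := by
              rcases Finset.mem_union.mp (hS12 ▸ hbS) with h | h
              · exact h
              · exfalso
                have hWM : WS w S2 = w a + WS w M := WS_erase w haS2
                have hwbM : w b ≤ WS w M := single_le_WS hw (Finset.mem_erase.mpr ⟨hba, h⟩)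
                linarith
            have hcard1 : 2 ≤ S1.card := by
              by_contra hc
              have hc1 : S1.card = 1 := by
                have := Finset.card_pos.mpr hne; omega
              obtain ⟨y, hy⟩ := Finset.card_eq_one.mp hc1
              have hyS1 : y ∈ S1 := by rw [hy]; exact Finset.mem_singleton_self y
              have : WS w S1 = w y := by rw [hy, WS, Finset.sum_singleton]
              have := hamax y (hS1sub hyS1)
              linarith
            have hbmax1 : ∀ x ∈ S1, w x ≤ w b := by
              intro x hx
              refine hbmax x (Finset.mem_erase.mpr ⟨?_, hS1sub hx⟩)
              intro hh; subst hh
              have := hS1lt x hx; omega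
            have hA := lemmaA hw hcard1 hMne hOm hbS1 hbmax1
            have hWM : WS w S2 = w a + WS w M := WS_erase w haS2
            linarith
        · -- S2 = {a}
          have hS2a : S2 = {a} := by
            have : S2.card = 1 := by
              have := Finset.card_pos.mpr ⟨a, haS2⟩; omega
            obtain ⟨y, hy⟩ := Finset.card_eq_one.mp this
            rw [hy] at haS2 ⊢
            rw [Finset.mem_singleton] at haS2
            rw [haS2]
          have hSa : S.erase a = S1 := by
            ext y
            rw [Finset.mem_erase]
            constructor
            · rintro ⟨hya, hyS⟩
              rcases Finset.mem_union.mp (hS12 ▸ hyS) with h | h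
              · exact h
              · exfalso; rw [hS2a, Finset.mem_singleton] at h; exact hya h
            · intro hy
              refine ⟨?_, hS1sub hy⟩
              intro hh; subst hh
              have := hS1lt y hy; omega
          have hDS2 : DP w S2 = 0 := by rw [hS2a]; exact dp_card_le_one w (by simp)
          rw [hSa]
          have := dp_nonneg hw S1
          linarith
end

section
variable {w : ℕ → ℝ}

lemma cost_eqTest_mem (w : ℕ → ℝ) {S : Finset ℕ} {k : ℕ} (hk : k ∈ S) (y z : CTree) :
    cost w S (.eqTest k y z) = WS w S + w k * (depthOf y k : ℝ) + cost w (S.erase k) z := by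
  unfold cost
  have h : ∀ q ∈ S, w q * ((depthOf (.eqTest k y z) q : ℕ) : ℝ)
      = (w q * (if q = k then (depthOf y q : ℝ) else (depthOf z q : ℝ))) + w q := by
    intro q _
    simp only [depthOf]
    push_cast
    split <;> ring
  rw [Finset.sum_congr rfl h, Finset.sum_add_distrib]
  have hsplit : ∑ q ∈ S, w q * (if q = k then (depthOf y q : ℝ) else (depthOf z q : ℝ))
      = w k * (depthOf y k : ℝ) + ∑ q ∈ S.erase k, w q * (depthOf z q : ℝ) := by
    rw [← Finset.add_sum_erase _ _ hk, if_pos rfl]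
    congr 1
    apply Finset.sum_congr rfl
    intro q hq
    rw [if_neg (Finset.mem_erase.mp hq).1]
  rw [hsplit, WS]
  ring

lemma cost_eqTest_notMem (w : ℕ → ℝ) {S : Finset ℕ} {k : ℕ} (hk : k ∉ S) (y z : CTree) :
    cost w S (.eqTest k y z) = WS w S + cost w S z := by
  unfold cost
  have h : ∀ q ∈ S, w q * ((depthOf (.eqTest k y z) q : ℕ) : ℝ)
      = w q * (depthOf z q : ℝ) + w q := by
    intro q hq
    have hqk : q ≠ k := fun hh => hk (hh ▸ hq)
    simp only [depthOf, if_neg hqk]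
    push_cast
    ring
  rw [Finset.sum_congr rfl h, Finset.sum_add_distrib, WS]
  ring

lemma cost_ltTest (w : ℕ → ℝ) (S : Finset ℕ) (c : ℕ) (y z : CTree) :
    cost w S (.ltTest c y z) = WS w S + cost w (S.filter (· < c)) y
      + cost w (S.filter fun x => ¬ x < c) z := by
  unfold cost
  have h : ∀ q ∈ S, w q * ((depthOf (.ltTest c y z) q : ℕ) : ℝ)
      = (w q * (if q < c then (depthOf y q : ℝ) else (depthOf z q : ℝ))) + w q := by
    intro q _
    simp only [depthOf]
    push_cast
    split <;> ring
  rw [Finset.sum_congr rfl h, Finset.sum_add_distrib]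
  have hsplit : ∑ q ∈ S, w q * (if q < c then (depthOf y q : ℝ) else (depthOf z q : ℝ))
      = ∑ q ∈ S.filter (· < c), w q * (depthOf y q : ℝ)
        + ∑ q ∈ S.filter (fun x => ¬ x < c), w q * (depthOf z q : ℝ) := by
    rw [← Finset.sum_filter_add_sum_filter_not S (· < c)]
    congr 1
    · apply Finset.sum_congr rfl
      intro q hq
      rw [if_pos (Finset.mem_filter.mp hq).2]
    · apply Finset.sum_congr rfl
      intro q hq
      rw [if_neg (Finset.mem_filter.mp hq).2]
  rw [hsplit, WS]
  ring

lemma cost_nonneg (hw : ∀ k, 0 ≤ w k) (S : Finset ℕ) (T : CTree) : 0 ≤ cost w S T := by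
  apply Finset.sum_nonneg
  intro q _
  exact mul_nonneg (hw q) (Nat.cast_nonneg _)

/-- lower bound: every search-correct tree costs at least `DP`. -/
lemma dp_le_cost (hw : ∀ k, 0 ≤ w k) (T : CTree) :
    ∀ S : Finset ℕ, (∀ q ∈ S, searchKey T q = q) → DP w S ≤ cost w S T := by
  induction T with
  | leaf k =>
    intro S hsearch
    have hcard : S.card ≤ 1 := by
      apply Finset.card_le_one.mpr
      intro p hp q hq
      have h1 := hsearch p hp
      have h2 := hsearch q hq
      simp only [searchKey] at h1 h2
      omega
    rw [dp_card_le_one w hcard]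
    exact cost_nonneg hw S _
  | eqTest k y z ihy ihz =>
    intro S hsearch
    by_cases hk : k ∈ S
    · rw [cost_eqTest_mem w hk]
      have hz : ∀ q ∈ S.erase k, searchKey z q = q := by
        intro q hq
        have h := hsearch q (Finset.mem_of_mem_erase hq)
        simp only [searchKey, if_neg (Finset.mem_erase.mp hq).1] at h
        exact h
      have hIH := ihz (S.erase k) hz
      by_cases h2 : 2 ≤ S.card
      · have := dp_le_eqCand w h2 hk
        have := mul_nonneg (hw k) (Nat.cast_nonneg (depthOf y k))
        linarith
      · rw [dp_card_le_one w (by omega)]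
        have := mul_nonneg (hw k) (Nat.cast_nonneg (depthOf y k))
        have := WS_nonneg hw S
        have := cost_nonneg hw (S.erase k) z
        linarith
    · rw [cost_eqTest_notMem w hk]
      have hz : ∀ q ∈ S, searchKey z q = q := by
        intro q hq
        have h := hsearch q hq
        have hqk : q ≠ k := fun hh => hk (hh ▸ hq)
        simp only [searchKey, if_neg hqk] at h
        exact h
      have hIH := ihz S hz
      have := WS_nonneg hw S
      linarith
  | ltTest c y z ihy ihz =>
    intro S hsearch
    rw [cost_ltTest w S c]
    set S1 := S.filter (· < c) with hS1def
    set S2 := S.filter (fun x => ¬ x < c) with hS2def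
    have hy : ∀ q ∈ S1, searchKey y q = q := by
      intro q hq
      obtain ⟨hqS, hqlt⟩ := Finset.mem_filter.mp hq
      have h := hsearch q hqS
      simp only [searchKey, if_pos hqlt] at h
      exact h
    have hz : ∀ q ∈ S2, searchKey z q = q := by
      intro q hq
      obtain ⟨hqS, hqge⟩ := Finset.mem_filter.mp hq
      have h := hsearch q hqS
      simp only [searchKey, if_neg hqge] at h
      exact h
    have hIHy := ihy S1 hy
    have hIHz := ihz S2 hz
    by_cases hS1e : S1.Nonempty
    · by_cases hS2e : S2.Nonempty
      · have hU : S1 ∪ S2 = S := Finset.filter_union_filter_not_eq _ S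
        have hO : ∀ p ∈ S1, ∀ q ∈ S2, p < q := by
          intro p hp q hq
          have h1 := (Finset.mem_filter.mp hp).2
          have h2 := (Finset.mem_filter.mp hq).2
          omega
        have := dp_le_cut_sets w hS1e hS2e hU hO
        linarith
      · -- S2 empty, S1 = S
        have hS2 : S2 = ∅ := Finset.not_nonempty_iff_eq_empty.mp hS2e
        have hS1 : S1 = S := by
          rw [← Finset.filter_union_filter_not_eq (· < c) S, ← hS1def, ← hS2def, hS2,
            Finset.union_empty]
        have hc2 : cost w S2 z = 0 := by rw [hS2]; simp [cost]
        have hcy : cost w S1 y = cost w S y := by rw [hS1]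
        rw [hS1] at hIHy
        have := WS_nonneg hw S
        linarith
    · have hS1 : S1 = ∅ := Finset.not_nonempty_iff_eq_empty.mp hS1e
      have hS2 : S2 = S := by
        rw [← Finset.filter_union_filter_not_eq (· < c) S, ← hS1def, ← hS2def, hS1,
          Finset.empty_union]
      have hc1 : cost w S1 y = 0 := by rw [hS1]; simp [cost]
      have hcz : cost w S2 z = cost w S z := by rw [hS2]
      rw [hS2] at hIHz
      have := WS_nonneg hw S
      linarith

/-- existence: a tree achieving `DP`. -/
lemma exists_dp_tree (hw : ∀ k, 0 ≤ w k) (S : Finset ℕ) : S.Nonempty →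
    ∃ T : CTree, leaves T ⊆ S ∧ (∀ q ∈ S, searchKey T q = q) ∧ cost w S T ≤ DP w S := by
  induction S using Finset.strongInduction with
  | _ S ih =>
    intro hSne
    by_cases h2 : 2 ≤ S.card
    · rcases dp_witness w h2 with ⟨k, hk, E⟩ | ⟨c, hc, hne, E⟩
      · -- eq root
        have hne' : (S.erase k).Nonempty := Finset.card_pos.mp (by
          rw [Finset.card_erase_of_mem hk]; omega)
        obtain ⟨T', hleaves, hsearch, hcost⟩ := ih (S.erase k) (Finset.erase_ssubset hk) hne'
        refine ⟨.eqTest k (.leaf k) T', ?_, ?_, ?_⟩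
        · intro x hx
          simp only [leaves, Finset.mem_union, Finset.mem_singleton] at hx
          rcases hx with rfl | hx
          · exact hk
          · exact Finset.mem_of_mem_erase (hleaves hx)
        · intro q hq
          simp only [searchKey]
          split
          · next hqk => subst hqk; rfl
          · next hqk => exact hsearch q (Finset.mem_erase.mpr ⟨hqk, hq⟩)
        · rw [cost_eqTest_mem w hk]
          simp only [depthOf]
          rw [E]
          push_cast
          linarith
      · -- lt root
        set S1 := S.filter (· < c) with hS1def
        set S2 := S.filter (fun x => ¬ x < c) with hS2def
        have hcS2 : c ∈ S2 := by
          rw [hS2def, Finset.mem_filter]; exact ⟨hc, by omega⟩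
        have hS2ne : S2.Nonempty := ⟨c, hcS2⟩
        obtain ⟨T1, hl1, hs1, hc1⟩ := ih S1 (filter_lt_ssubset hc) hne
        obtain ⟨T2, hl2, hs2, hc2⟩ := ih S2 (filter_ge_ssubset hne) hS2ne
        refine ⟨.ltTest c T1 T2, ?_, ?_, ?_⟩
        · intro x hx
          simp only [leaves, Finset.mem_union] at hx
          rcases hx with hx | hx
          · exact (Finset.filter_subset _ _) (hl1 hx)
          · exact (Finset.filter_subset _ _) (hl2 hx)
        · intro q hq
          simp only [searchKey]
          split
          · next hqc => exact hs1 q (Finset.mem_filter.mpr ⟨hq, hqc⟩)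
          · next hqc => exact hs2 q (Finset.mem_filter.mpr ⟨hq, hqc⟩)
        · rw [cost_ltTest w S c, ← hS1def, ← hS2def, E]
          linarith
    · -- singleton
      obtain ⟨x, hx⟩ := hSne
      have hS : S = {x} := by
        have : S.card = 1 := by
          have := Finset.card_pos.mpr ⟨x, hx⟩; omega
        obtain ⟨y, hy⟩ := Finset.card_eq_one.mp this
        rw [hy] at hx ⊢
        rw [Finset.mem_singleton] at hx
        rw [hx]
      refine ⟨.leaf x, ?_, ?_, ?_⟩
      · intro z hz
        simp only [leaves, Finset.mem_singleton] at hz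
        rw [hz, hS]
        exact Finset.mem_singleton_self x
      · intro q hq
        rw [hS, Finset.mem_singleton] at hq
        rw [hq]
        rfl
      · rw [dp_card_le_one w (by rw [hS]; simp)]
        rw [hS]
        simp [cost, depthOf]
end

/-- If the two heaviest weights satisfy `2α + β ≥ W`, some optimal tree is
rooted at an equal-to test. -/
theorem stmt0 (n : ℕ) (hn : 2 ≤ n) (w : ℕ → ℝ)
    (hw : ∀ k ∈ Finset.Icc 1 n, 0 ≤ w k)
    (a b : ℕ) (ha : a ∈ Finset.Icc 1 n) (hb : b ∈ Finset.Icc 1 n) (hab : a ≠ b)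
    (hba : w b ≤ w a)
    (hmaxa : ∀ k ∈ Finset.Icc 1 n, w k ≤ w a)
    (hmaxb : ∀ k ∈ Finset.Icc 1 n, k ≠ a → w k ≤ w b)
    (hthr : (∑ k ∈ Finset.Icc 1 n, w k) ≤ 2 * w a + w b) :
    ∃ T, IsOptimal w (Finset.Icc 1 n) T ∧ EqRoot T := by
  set I := Finset.Icc 1 n with hIdef
  set w' : ℕ → ℝ := fun k => max (w k) 0 with hw'def
  have hw' : ∀ k, 0 ≤ w' k := fun k => le_max_right _ _
  have hagree : ∀ k ∈ I, w' k = w k := fun k hk => max_eq_left (hw k hk)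
  have hcost_agree : ∀ (S : Finset ℕ), S ⊆ I → ∀ T, cost w S T = cost w' S T := by
    intro S hS T
    unfold cost
    apply Finset.sum_congr rfl
    intro q hq
    rw [hagree q (hS hq)]
  have hcardI : I.card = n := by
    rw [hIdef, Nat.card_Icc]
    omega
  have h2I : 2 ≤ I.card := by omega
  have hbea : b ∈ I.erase a := Finset.mem_erase.mpr ⟨fun h => hab h.symm, hb⟩
  -- heavy hypothesis for w'
  have hamax' : ∀ x ∈ I, w' x ≤ w' a := by
    intro x hx
    rw [hagree x hx, hagree a ha]
    exact hmaxa x hx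
  have hheavy : ∃ b' ∈ I.erase a, (∀ x ∈ I.erase a, w' x ≤ w' b') ∧
      WS w' I ≤ 2 * w' a + w' b' := by
    refine ⟨b, hbea, ?_, ?_⟩
    · intro x hx
      obtain ⟨hxa, hxI⟩ := Finset.mem_erase.mp hx
      rw [hagree x hxI, hagree b hb]
      exact hmaxb x hxI hxa
    · rw [hagree a ha, hagree b hb]
      have : WS w' I = ∑ k ∈ I, w k := by
        apply Finset.sum_congr rfl
        intro q hq
        exact hagree q hq
      rw [this]
      exact hthr
  have hMain := main_heavy hw' I a ha hamax' hheavy h2I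
  -- build the tree
  have hIane : (I.erase a).Nonempty := ⟨b, hbea⟩
  obtain ⟨T', hleaves, hsearch, hcost⟩ := exists_dp_tree hw' (I.erase a) hIane
  refine ⟨.eqTest a (.leaf a) T', ⟨⟨?_, ?_⟩, ?_⟩, trivial⟩
  · -- leaves
    intro x hx
    simp only [leaves, Finset.mem_union, Finset.mem_singleton] at hx
    rcases hx with rfl | hx
    · exact ha
    · exact Finset.mem_of_mem_erase (hleaves hx)
  · -- search correctness
    intro q hq
    simp only [searchKey]
    split
    · next hqa => subst hqa; rfl
    · next hqa => exact hsearch q (Finset.mem_erase.mpr ⟨hqa, hq⟩)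
  · -- optimality
    intro T'' hT''
    have hcostT : cost w I (.eqTest a (.leaf a) T') ≤ DP w' I := by
      rw [hcost_agree I (by rfl) _, cost_eqTest_mem w' ha]
      simp only [depthOf]
      push_cast
      have : cost w' (I.erase a) T' ≤ DP w' (I.erase a) := hcost
      linarith
    have hlb : DP w' I ≤ cost w I T'' := by
      rw [hcost_agree I (by rfl) T'']
      exact dp_le_cost hw' T'' I hT''.2
    linarith

end TwoWCST
end

section
/- Let α, β, ε be reals with β ≤ α, 2α + β = 1, α < 2/5, and 0 < ε < (2β − α)/4. For the 4-key instance with weights (α/2, α, β − ε, α/2 + ε) (total weight 1): the minimum cost of a 2WCST rooted at an equal-to test equals 4α + 2β + ε, the minimum cost of a 2WCST rooted at a less-than test equals 4α + 2β, and hence every optimal 2WCST for this instance is rooted at a less-than test, even though its two heaviest weights α and β − ε satisfy 2α + (β − ε) < 1. -/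
namespace TwoWCST

section Aux

lemma kraft (T : CTree) : ∀ (I : Finset ℕ), (∀ q ∈ I, searchKey T q = q) →
    ∑ q ∈ I, ((2:ℝ)⁻¹)^(depthOf T q) ≤ 1 := by
  induction T with
  | leaf k =>
    intro I h
    have hsub : I ⊆ {k} := by
      intro q hq
      have := h q hq
      simp only [searchKey] at this
      simp [this]
    have he : ∑ q ∈ I, ((2:ℝ)⁻¹)^(depthOf (.leaf k) q) = (I.card : ℝ) := by
      simp [depthOf]
    rw [he]
    have := Finset.card_le_card hsub
    simp only [Finset.card_singleton] at this
    exact_mod_cast this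
  | eqTest k y n ihy ihn =>
    intro I h
    rw [← Finset.sum_filter_add_sum_filter_not I (fun q => q = k)]
    have hy : ∑ q ∈ I.filter (fun q => q = k), ((2:ℝ)⁻¹)^(depthOf (.eqTest k y n) q)
        = 2⁻¹ * ∑ q ∈ I.filter (fun q => q = k), ((2:ℝ)⁻¹)^(depthOf y q) := by
      rw [Finset.mul_sum]
      refine Finset.sum_congr rfl (fun q hq => ?_)
      have hq' : q = k := (Finset.mem_filter.mp hq).2
      simp only [depthOf, if_pos hq', pow_succ]
      ring
    have hn : ∑ q ∈ I.filter (fun q => ¬ q = k), ((2:ℝ)⁻¹)^(depthOf (.eqTest k y n) q)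
        = 2⁻¹ * ∑ q ∈ I.filter (fun q => ¬ q = k), ((2:ℝ)⁻¹)^(depthOf n q) := by
      rw [Finset.mul_sum]
      refine Finset.sum_congr rfl (fun q hq => ?_)
      have hq' : ¬ q = k := (Finset.mem_filter.mp hq).2
      simp only [depthOf, if_neg hq', pow_succ]
      ring
    rw [hy, hn]
    have hy2 := ihy (I.filter (fun q => q = k)) (fun q hq => by
      have h1 := h q (Finset.mem_filter.mp hq).1
      have hq' : q = k := (Finset.mem_filter.mp hq).2
      simpa only [searchKey, if_pos hq'] using h1)
    have hn2 := ihn (I.filter (fun q => ¬ q = k)) (fun q hq => by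
      have h1 := h q (Finset.mem_filter.mp hq).1
      have hq' : ¬ q = k := (Finset.mem_filter.mp hq).2
      simpa only [searchKey, if_neg hq'] using h1)
    nlinarith
  | ltTest k y n ihy ihn =>
    intro I h
    rw [← Finset.sum_filter_add_sum_filter_not I (fun q => q < k)]
    have hy : ∑ q ∈ I.filter (fun q => q < k), ((2:ℝ)⁻¹)^(depthOf (.ltTest k y n) q)
        = 2⁻¹ * ∑ q ∈ I.filter (fun q => q < k), ((2:ℝ)⁻¹)^(depthOf y q) := by
      rw [Finset.mul_sum]
      refine Finset.sum_congr rfl (fun q hq => ?_)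
      have hq' : q < k := (Finset.mem_filter.mp hq).2
      simp only [depthOf, if_pos hq', pow_succ]
      ring
    have hn : ∑ q ∈ I.filter (fun q => ¬ q < k), ((2:ℝ)⁻¹)^(depthOf (.ltTest k y n) q)
        = 2⁻¹ * ∑ q ∈ I.filter (fun q => ¬ q < k), ((2:ℝ)⁻¹)^(depthOf n q) := by
      rw [Finset.mul_sum]
      refine Finset.sum_congr rfl (fun q hq => ?_)
      have hq' : ¬ q < k := (Finset.mem_filter.mp hq).2
      simp only [depthOf, if_neg hq', pow_succ]
      ring
    rw [hy, hn]
    have hy2 := ihy (I.filter (fun q => q < k)) (fun q hq => by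
      have h1 := h q (Finset.mem_filter.mp hq).1
      have hq' : q < k := (Finset.mem_filter.mp hq).2
      simpa only [searchKey, if_pos hq'] using h1)
    have hn2 := ihn (I.filter (fun q => ¬ q < k)) (fun q hq => by
      have h1 := h q (Finset.mem_filter.mp hq).1
      have hq' : ¬ q < k := (Finset.mem_filter.mp hq).2
      simpa only [searchKey, if_neg hq'] using h1)
    nlinarith

lemma depth_ge_one (T : CTree) (a b : ℕ) (hab : a ≠ b) (ha : searchKey T a = a)
    (hb : searchKey T b = b) (q : ℕ) : 1 ≤ depthOf T q := by
  cases T with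
  | leaf k => simp only [searchKey] at ha hb; omega
  | eqTest k y n => simp [depthOf]
  | ltTest k y n => simp [depthOf]

lemma sum4 (f : ℕ → ℝ) : ∑ q ∈ Finset.Icc 1 4, f q = f 1 + f 2 + f 3 + f 4 := by
  have h : Finset.Icc 1 4 = ({1,2,3,4} : Finset ℕ) := by decide
  rw [h, Finset.sum_insert (by decide), Finset.sum_insert (by decide),
    Finset.sum_insert (by decide), Finset.sum_singleton]
  ring

lemma sum3 (f : ℕ → ℝ) (a b c : ℕ) (h1 : a ≠ b) (h2 : a ≠ c) (h3 : b ≠ c) :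
    ∑ q ∈ ({a,b,c} : Finset ℕ), f q = f a + f b + f c := by
  rw [Finset.sum_insert (by simp [h1, h2]), Finset.sum_insert (by simp [h3]),
    Finset.sum_singleton]
  ring

lemma keyfact (d : ℕ) (hd : 1 ≤ d) (v : ℝ) (hv : 0 ≤ v) :
    (((2:ℝ)⁻¹)^d = 2⁻¹ ∧ v * (d:ℝ) = v * 1) ∨
    (((2:ℝ)⁻¹)^d = 4⁻¹ ∧ v * (d:ℝ) = v * 2) ∨
    (((2:ℝ)⁻¹)^d ≤ 8⁻¹ ∧ v * 3 ≤ v * (d:ℝ)) := by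
  match d, hd with
  | 1, _ => left; norm_num
  | 2, _ => right; left; norm_num
  | (m+3), _ =>
    right; right
    constructor
    · calc ((2:ℝ)⁻¹)^(m+3) ≤ ((2:ℝ)⁻¹)^3 := by
            apply pow_le_pow_of_le_one (by norm_num) (by norm_num); omega
        _ = 8⁻¹ := by norm_num
    · apply mul_le_mul_of_nonneg_left _ hv
      push_cast
      have : (0:ℝ) ≤ (m:ℝ) := Nat.cast_nonneg m
      linarith

lemma key2 (d : ℕ) (hd : 2 ≤ d) (v : ℝ) (hv : 0 ≤ v) :
    (((2:ℝ)⁻¹)^d = 4⁻¹ ∧ v * (d:ℝ) = v * 2) ∨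
    (((2:ℝ)⁻¹)^d ≤ 8⁻¹ ∧ v * 3 ≤ v * (d:ℝ)) := by
  rcases keyfact d (by omega) v hv with ⟨h1, _⟩ | h | h
  · exfalso
    have h2 : ((2:ℝ)⁻¹)^d ≤ ((2:ℝ)⁻¹)^2 :=
      pow_le_pow_of_le_one (by norm_num) (by norm_num) hd
    rw [h1] at h2; norm_num at h2
  · exact Or.inl h
  · exact Or.inr h

lemma core3 (γ u v1 v2 v3 : ℝ) (e d1 d2 d3 : ℕ)
    (hu : 0 ≤ u) (hv1 : 0 ≤ v1) (hv2 : 0 ≤ v2) (hv3 : 0 ≤ v3)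
    (he : 1 ≤ e) (hd1 : 2 ≤ d1) (hd2 : 2 ≤ d2) (hd3 : 2 ≤ d3)
    (hK : ((2:ℝ)⁻¹)^d1 + ((2:ℝ)⁻¹)^d2 + ((2:ℝ)⁻¹)^d3 ≤ 2⁻¹)
    (hb1 : γ ≤ u + 2*v1 + 3*(v2+v3))
    (hb2 : γ ≤ u + 2*v2 + 3*(v1+v3))
    (hb3 : γ ≤ u + 2*v3 + 3*(v1+v2))
    (hb0 : γ ≤ u + 3*(v1+v2+v3)) :
    γ ≤ u*(e:ℝ) + v1*(d1:ℝ) + v2*(d2:ℝ) + v3*(d3:ℝ) := by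
  have hue : u*1 ≤ u*(e:ℝ) := by
    apply mul_le_mul_of_nonneg_left _ hu; exact_mod_cast he
  have p1 : (0:ℝ) < ((2:ℝ)⁻¹)^d1 := by positivity
  have p2 : (0:ℝ) < ((2:ℝ)⁻¹)^d2 := by positivity
  have p3 : (0:ℝ) < ((2:ℝ)⁻¹)^d3 := by positivity
  rcases key2 d1 hd1 v1 hv1 with ⟨ha1, hm1⟩ | ⟨ha1, hm1⟩ <;>
    rcases key2 d2 hd2 v2 hv2 with ⟨ha2, hm2⟩ | ⟨ha2, hm2⟩ <;>
      rcases key2 d3 hd3 v3 hv3 with ⟨ha3, hm3⟩ | ⟨ha3, hm3⟩ <;>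
        linarith

lemma core4 (γ v1 v2 v3 v4 : ℝ) (d1 d2 d3 d4 : ℕ)
    (hv1 : 0 ≤ v1) (hv2 : 0 ≤ v2) (hv3 : 0 ≤ v3) (hv4 : 0 ≤ v4)
    (hd1 : 2 ≤ d1) (hd2 : 2 ≤ d2) (hd3 : 2 ≤ d3) (hd4 : 2 ≤ d4)
    (hK : ((2:ℝ)⁻¹)^d1 + ((2:ℝ)⁻¹)^d2 + ((2:ℝ)⁻¹)^d3 + ((2:ℝ)⁻¹)^d4 ≤ 2⁻¹)
    (hb1 : γ ≤ 2*v1 + 3*(v2+v3+v4))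
    (hb2 : γ ≤ 2*v2 + 3*(v1+v3+v4))
    (hb3 : γ ≤ 2*v3 + 3*(v1+v2+v4))
    (hb4 : γ ≤ 2*v4 + 3*(v1+v2+v3))
    (hb0 : γ ≤ 3*(v1+v2+v3+v4)) :
    γ ≤ v1*(d1:ℝ) + v2*(d2:ℝ) + v3*(d3:ℝ) + v4*(d4:ℝ) := by
  have p1 : (0:ℝ) < ((2:ℝ)⁻¹)^d1 := by positivity
  have p2 : (0:ℝ) < ((2:ℝ)⁻¹)^d2 := by positivity
  have p3 : (0:ℝ) < ((2:ℝ)⁻¹)^d3 := by positivity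
  have p4 : (0:ℝ) < ((2:ℝ)⁻¹)^d4 := by positivity
  rcases key2 d1 hd1 v1 hv1 with ⟨ha1, hm1⟩ | ⟨ha1, hm1⟩ <;>
    rcases key2 d2 hd2 v2 hv2 with ⟨ha2, hm2⟩ | ⟨ha2, hm2⟩ <;>
      rcases key2 d3 hd3 v3 hv3 with ⟨ha3, hm3⟩ | ⟨ha3, hm3⟩ <;>
        rcases key2 d4 hd4 v4 hv4 with ⟨ha4, hm4⟩ | ⟨ha4, hm4⟩ <;>
          linarith

set_option maxHeartbeats 3000000 in
lemma coreAll (α β ε : ℝ) (hβα : β ≤ α) (hsum : 2*α + β = 1)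
    (hε0 : 0 < ε) (hε4 : 4*ε < 2*β - α)
    (d1 d2 d3 d4 : ℕ) (h1 : 1 ≤ d1) (h2 : 1 ≤ d2) (h3 : 1 ≤ d3) (h4 : 1 ≤ d4)
    (hK : ((2:ℝ)⁻¹)^d1 + ((2:ℝ)⁻¹)^d2 + ((2:ℝ)⁻¹)^d3 + ((2:ℝ)⁻¹)^d4 ≤ 1) :
    2 ≤ (α/2)*(d1:ℝ) + α*(d2:ℝ) + (β-ε)*(d3:ℝ) + (α/2+ε)*(d4:ℝ) := by
  have hβ : 0 < β := by linarith
  have hα0 : 0 < α := by linarith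
  have w1 : (0:ℝ) ≤ α/2 := by linarith
  have w2 : (0:ℝ) ≤ α := by linarith
  have w3 : (0:ℝ) ≤ β - ε := by linarith
  have w4 : (0:ℝ) ≤ α/2 + ε := by linarith
  have p1 : (0:ℝ) < ((2:ℝ)⁻¹)^d1 := by positivity
  have p2 : (0:ℝ) < ((2:ℝ)⁻¹)^d2 := by positivity
  have p3 : (0:ℝ) < ((2:ℝ)⁻¹)^d3 := by positivity
  have p4 : (0:ℝ) < ((2:ℝ)⁻¹)^d4 := by positivity
  rcases keyfact d1 h1 (α/2) w1 with ⟨ha1, hm1⟩ | ⟨ha1, hm1⟩ | ⟨ha1, hm1⟩ <;>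
    rcases keyfact d2 h2 α w2 with ⟨ha2, hm2⟩ | ⟨ha2, hm2⟩ | ⟨ha2, hm2⟩ <;>
      rcases keyfact d3 h3 (β-ε) w3 with ⟨ha3, hm3⟩ | ⟨ha3, hm3⟩ | ⟨ha3, hm3⟩ <;>
        rcases keyfact d4 h4 (α/2+ε) w4 with ⟨ha4, hm4⟩ | ⟨ha4, hm4⟩ | ⟨ha4, hm4⟩ <;>
          linarith

lemma lb_all (α β ε : ℝ) (hβα : β ≤ α) (hsum : 2 * α + β = 1)
    (hε0 : 0 < ε) (hε1 : ε < (2 * β - α) / 4) (T : CTree)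
    (hv : Valid (Finset.Icc 1 4) T) :
    4 * α + 2 * β ≤ cost (fun k => if k = 1 then α / 2 else if k = 2 then α
        else if k = 3 then β - ε else if k = 4 then α / 2 + ε else 0)
      (Finset.Icc 1 4) T := by
  have hε4 : 4*ε < 2*β - α := by linarith
  have hs := hv.2
  have s1 : searchKey T 1 = 1 := hs 1 (by decide)
  have s2 : searchKey T 2 = 2 := hs 2 (by decide)
  have hd : ∀ q, 1 ≤ depthOf T q := depth_ge_one T 1 2 (by decide) s1 s2
  have hK := kraft T (Finset.Icc 1 4) hs
  rw [sum4 (fun q => ((2:ℝ)⁻¹)^(depthOf T q))] at hK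
  have hc : cost (fun k => if k = 1 then α / 2 else if k = 2 then α
        else if k = 3 then β - ε else if k = 4 then α / 2 + ε else 0)
      (Finset.Icc 1 4) T
      = (α/2)*((depthOf T 1 : ℕ):ℝ) + α*((depthOf T 2 : ℕ):ℝ)
        + (β-ε)*((depthOf T 3 : ℕ):ℝ) + (α/2+ε)*((depthOf T 4 : ℕ):ℝ) := by
    rw [cost, sum4]
    norm_num
  have H := coreAll α β ε hβα hsum hε0 hε4 (depthOf T 1) (depthOf T 2)
    (depthOf T 3) (depthOf T 4) (hd 1) (hd 2) (hd 3) (hd 4) hK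
  rw [hc]
  linarith

lemma lb_eq (α β ε : ℝ) (hβα : β ≤ α) (hsum : 2 * α + β = 1) (hα : α < 2 / 5)
    (hε0 : 0 < ε) (hε1 : ε < (2 * β - α) / 4) (T : CTree)
    (hv : Valid (Finset.Icc 1 4) T) (hr : EqRoot T) :
    4 * α + 2 * β + ε ≤ cost (fun k => if k = 1 then α / 2 else if k = 2 then α
        else if k = 3 then β - ε else if k = 4 then α / 2 + ε else 0)
      (Finset.Icc 1 4) T := by
  have hε4 : 4*ε < 2*β - α := by linarith
  have hβ : 0 < β := by linarith
  have hα0 : 0 < α := by linarith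
  have hw1 : (0:ℝ) ≤ α/2 := by linarith
  have hw2 : (0:ℝ) ≤ α := by linarith
  have hw3 : (0:ℝ) ≤ β - ε := by linarith
  have hw4 : (0:ℝ) ≤ α/2 + ε := by linarith
  cases T with
  | leaf k => exact hr.elim
  | ltTest k y n => exact hr.elim
  | eqTest k y n =>
    have hs := hv.2
    have s : ∀ q ∈ Finset.Icc 1 4, q ≠ k → searchKey n q = q := by
      intro q hq hqk
      have := hs q hq
      simpa only [searchKey, if_neg hqk] using this
    by_cases hk : k ∈ Finset.Icc 1 4
    · rw [Finset.mem_Icc] at hk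
      obtain ⟨hk1, hk4⟩ := hk
      interval_cases k
      · -- k = 1
        have s2 : searchKey n 2 = 2 := s 2 (by decide) (by decide)
        have s3 : searchKey n 3 = 3 := s 3 (by decide) (by decide)
        have s4 : searchKey n 4 = 4 := s 4 (by decide) (by decide)
        have hK := kraft n ({2,3,4} : Finset ℕ) (by
          intro q hq; fin_cases hq <;> assumption)
        rw [sum3 (fun q => ((2:ℝ)⁻¹)^(depthOf n q)) 2 3 4 (by decide) (by decide) (by decide)] at hK
        have hd : ∀ q, 1 ≤ depthOf n q := depth_ge_one n 2 3 (by decide) s2 s3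
        have hc : cost (fun k => if k = 1 then α / 2 else if k = 2 then α
              else if k = 3 then β - ε else if k = 4 then α / 2 + ε else 0)
            (Finset.Icc 1 4) (.eqTest 1 y n)
            = (α/2)*((depthOf y 1 + 1 : ℕ):ℝ) + α*((depthOf n 2 + 1 : ℕ):ℝ)
              + (β-ε)*((depthOf n 3 + 1 : ℕ):ℝ) + (α/2+ε)*((depthOf n 4 + 1 : ℕ):ℝ) := by
          rw [cost, sum4]
          norm_num [depthOf]
        have H := core3 (4*α+2*β+ε) (α/2) α (β-ε) (α/2+ε)
          (depthOf y 1 + 1) (depthOf n 2 + 1) (depthOf n 3 + 1) (depthOf n 4 + 1)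
          hw1 hw2 hw3 hw4 (by omega)
          (by have := hd 2; omega) (by have := hd 3; omega) (by have := hd 4; omega)
          (by rw [pow_succ, pow_succ, pow_succ]; linarith)
          (by linarith) (by linarith) (by linarith) (by linarith)
        rw [hc]; push_cast at H ⊢; linarith
      · -- k = 2
        have s1 : searchKey n 1 = 1 := s 1 (by decide) (by decide)
        have s3 : searchKey n 3 = 3 := s 3 (by decide) (by decide)
        have s4 : searchKey n 4 = 4 := s 4 (by decide) (by decide)
        have hK := kraft n ({1,3,4} : Finset ℕ) (by
          intro q hq; fin_cases hq <;> assumption)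
        rw [sum3 (fun q => ((2:ℝ)⁻¹)^(depthOf n q)) 1 3 4 (by decide) (by decide) (by decide)] at hK
        have hd : ∀ q, 1 ≤ depthOf n q := depth_ge_one n 1 3 (by decide) s1 s3
        have hc : cost (fun k => if k = 1 then α / 2 else if k = 2 then α
              else if k = 3 then β - ε else if k = 4 then α / 2 + ε else 0)
            (Finset.Icc 1 4) (.eqTest 2 y n)
            = (α/2)*((depthOf n 1 + 1 : ℕ):ℝ) + α*((depthOf y 2 + 1 : ℕ):ℝ)
              + (β-ε)*((depthOf n 3 + 1 : ℕ):ℝ) + (α/2+ε)*((depthOf n 4 + 1 : ℕ):ℝ) := by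
          rw [cost, sum4]
          norm_num [depthOf]
        have H := core3 (4*α+2*β+ε) α (α/2) (β-ε) (α/2+ε)
          (depthOf y 2 + 1) (depthOf n 1 + 1) (depthOf n 3 + 1) (depthOf n 4 + 1)
          hw2 hw1 hw3 hw4 (by omega)
          (by have := hd 1; omega) (by have := hd 3; omega) (by have := hd 4; omega)
          (by rw [pow_succ, pow_succ, pow_succ]; linarith)
          (by linarith) (by linarith) (by linarith) (by linarith)
        rw [hc]; push_cast at H ⊢; linarith
      · -- k = 3
        have s1 : searchKey n 1 = 1 := s 1 (by decide) (by decide)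
        have s2 : searchKey n 2 = 2 := s 2 (by decide) (by decide)
        have s4 : searchKey n 4 = 4 := s 4 (by decide) (by decide)
        have hK := kraft n ({1,2,4} : Finset ℕ) (by
          intro q hq; fin_cases hq <;> assumption)
        rw [sum3 (fun q => ((2:ℝ)⁻¹)^(depthOf n q)) 1 2 4 (by decide) (by decide) (by decide)] at hK
        have hd : ∀ q, 1 ≤ depthOf n q := depth_ge_one n 1 2 (by decide) s1 s2
        have hc : cost (fun k => if k = 1 then α / 2 else if k = 2 then α
              else if k = 3 then β - ε else if k = 4 then α / 2 + ε else 0)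
            (Finset.Icc 1 4) (.eqTest 3 y n)
            = (α/2)*((depthOf n 1 + 1 : ℕ):ℝ) + α*((depthOf n 2 + 1 : ℕ):ℝ)
              + (β-ε)*((depthOf y 3 + 1 : ℕ):ℝ) + (α/2+ε)*((depthOf n 4 + 1 : ℕ):ℝ) := by
          rw [cost, sum4]
          norm_num [depthOf]
        have H := core3 (4*α+2*β+ε) (β-ε) (α/2) α (α/2+ε)
          (depthOf y 3 + 1) (depthOf n 1 + 1) (depthOf n 2 + 1) (depthOf n 4 + 1)
          hw3 hw1 hw2 hw4 (by omega)
          (by have := hd 1; omega) (by have := hd 2; omega) (by have := hd 4; omega)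
          (by rw [pow_succ, pow_succ, pow_succ]; linarith)
          (by linarith) (by linarith) (by linarith) (by linarith)
        rw [hc]; push_cast at H ⊢; linarith
      · -- k = 4
        have s1 : searchKey n 1 = 1 := s 1 (by decide) (by decide)
        have s2 : searchKey n 2 = 2 := s 2 (by decide) (by decide)
        have s3 : searchKey n 3 = 3 := s 3 (by decide) (by decide)
        have hK := kraft n ({1,2,3} : Finset ℕ) (by
          intro q hq; fin_cases hq <;> assumption)
        rw [sum3 (fun q => ((2:ℝ)⁻¹)^(depthOf n q)) 1 2 3 (by decide) (by decide) (by decide)] at hK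
        have hd : ∀ q, 1 ≤ depthOf n q := depth_ge_one n 1 2 (by decide) s1 s2
        have hc : cost (fun k => if k = 1 then α / 2 else if k = 2 then α
              else if k = 3 then β - ε else if k = 4 then α / 2 + ε else 0)
            (Finset.Icc 1 4) (.eqTest 4 y n)
            = (α/2)*((depthOf n 1 + 1 : ℕ):ℝ) + α*((depthOf n 2 + 1 : ℕ):ℝ)
              + (β-ε)*((depthOf n 3 + 1 : ℕ):ℝ) + (α/2+ε)*((depthOf y 4 + 1 : ℕ):ℝ) := by
          rw [cost, sum4]
          norm_num [depthOf]
        have H := core3 (4*α+2*β+ε) (α/2+ε) (α/2) α (β-ε)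
          (depthOf y 4 + 1) (depthOf n 1 + 1) (depthOf n 2 + 1) (depthOf n 3 + 1)
          hw4 hw1 hw2 hw3 (by omega)
          (by have := hd 1; omega) (by have := hd 2; omega) (by have := hd 3; omega)
          (by rw [pow_succ, pow_succ, pow_succ]; linarith)
          (by linarith) (by linarith) (by linarith) (by linarith)
        rw [hc]; push_cast at H ⊢; linarith
    · -- k outside {1,2,3,4}
      have hne : ∀ q ∈ Finset.Icc 1 4, q ≠ k := by
        intro q hq
        intro hqk
        exact hk (hqk ▸ hq)
      have sn : ∀ q ∈ Finset.Icc 1 4, searchKey n q = q := fun q hq => s q hq (hne q hq)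
      have hK := kraft n (Finset.Icc 1 4) sn
      rw [sum4 (fun q => ((2:ℝ)⁻¹)^(depthOf n q))] at hK
      have hd : ∀ q, 1 ≤ depthOf n q :=
        depth_ge_one n 1 2 (by decide) (sn 1 (by decide)) (sn 2 (by decide))
      have e1 : (1:ℕ) ≠ k := hne 1 (by decide)
      have e2 : (2:ℕ) ≠ k := hne 2 (by decide)
      have e3 : (3:ℕ) ≠ k := hne 3 (by decide)
      have e4 : (4:ℕ) ≠ k := hne 4 (by decide)
      have hc : cost (fun k => if k = 1 then α / 2 else if k = 2 then α
            else if k = 3 then β - ε else if k = 4 then α / 2 + ε else 0)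
          (Finset.Icc 1 4) (.eqTest k y n)
          = (α/2)*((depthOf n 1 + 1 : ℕ):ℝ) + α*((depthOf n 2 + 1 : ℕ):ℝ)
            + (β-ε)*((depthOf n 3 + 1 : ℕ):ℝ) + (α/2+ε)*((depthOf n 4 + 1 : ℕ):ℝ) := by
        rw [cost, sum4]
        simp only [depthOf, if_neg e1, if_neg e2, if_neg e3, if_neg e4]
        norm_num
      have H := core4 (4*α+2*β+ε) (α/2) α (β-ε) (α/2+ε)
        (depthOf n 1 + 1) (depthOf n 2 + 1) (depthOf n 3 + 1) (depthOf n 4 + 1)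
        hw1 hw2 hw3 hw4
        (by have := hd 1; omega) (by have := hd 2; omega)
        (by have := hd 3; omega) (by have := hd 4; omega)
        (by rw [pow_succ, pow_succ, pow_succ, pow_succ]; linarith)
        (by linarith) (by linarith) (by linarith) (by linarith) (by linarith)
      rw [hc]; push_cast at H ⊢; linarith

/-- The optimal less-than-rooted tree. -/
def Tlt : CTree := .ltTest 3 (.ltTest 2 (.leaf 1) (.leaf 2)) (.ltTest 4 (.leaf 3) (.leaf 4))

/-- The optimal equal-to-rooted tree. -/
def Teq : CTree := .eqTest 2 (.leaf 2) (.eqTest 3 (.leaf 3) (.ltTest 4 (.leaf 1) (.leaf 4)))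

lemma valid_Tlt : Valid (Finset.Icc 1 4) Tlt := ⟨by decide, by decide⟩

lemma valid_Teq : Valid (Finset.Icc 1 4) Teq := ⟨by decide, by decide⟩

lemma cost_Tlt (α β ε : ℝ) :
    cost (fun k => if k = 1 then α / 2 else if k = 2 then α
        else if k = 3 then β - ε else if k = 4 then α / 2 + ε else 0)
      (Finset.Icc 1 4) Tlt = 4 * α + 2 * β := by
  rw [cost, sum4]
  norm_num [Tlt, depthOf]
  ring

lemma cost_Teq (α β ε : ℝ) :
    cost (fun k => if k = 1 then α / 2 else if k = 2 then α
        else if k = 3 then β - ε else if k = 4 then α / 2 + ε else 0)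
      (Finset.Icc 1 4) Teq = 4 * α + 2 * β + ε := by
  rw [cost, sum4]
  norm_num [Teq, depthOf]
  ring

end Aux

/-- Tightness of the `2α + β` threshold: for the 4-key instance
`(α/2, α, β − ε, α/2 + ε)` with `2α + β = 1`, `α < 2/5`, every optimal tree is
rooted at a less-than test, although `2α + (β − ε) < 1`. -/
theorem stmt5 (α β ε : ℝ) (hβα : β ≤ α) (hsum : 2 * α + β = 1) (hα : α < 2 / 5)
    (hε0 : 0 < ε) (hε1 : ε < (2 * β - α) / 4) :
    CEq (fun k => if k = 1 then α / 2 else if k = 2 then α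
        else if k = 3 then β - ε else if k = 4 then α / 2 + ε else 0)
      (Finset.Icc 1 4) = 4 * α + 2 * β + ε ∧
    CLt (fun k => if k = 1 then α / 2 else if k = 2 then α
        else if k = 3 then β - ε else if k = 4 then α / 2 + ε else 0)
      (Finset.Icc 1 4) = 4 * α + 2 * β ∧
    (∀ T, IsOptimal (fun k => if k = 1 then α / 2 else if k = 2 then α
        else if k = 3 then β - ε else if k = 4 then α / 2 + ε else 0)
        (Finset.Icc 1 4) T → LtRoot T) ∧
    2 * α + (β - ε) < 1 := by
  have hε4 : 4*ε < 2*β - α := by linarith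
  have hvlt := valid_Tlt
  have hveq := valid_Teq
  have hclt := cost_Tlt α β ε
  have hceq := cost_Teq α β ε
  refine ⟨?_, ?_, ?_, by linarith⟩
  · -- CEq
    rw [CEq]
    apply le_antisymm
    · apply csInf_le
      · refine ⟨4 * α + 2 * β + ε, ?_⟩
        rintro c ⟨T, hT, hr, rfl⟩
        exact lb_eq α β ε hβα hsum hα hε0 hε1 T hT hr
      · exact ⟨Teq, hveq, trivial, hceq⟩
    · refine le_csInf ?_ ?_
      · exact ⟨4 * α + 2 * β + ε, Teq, hveq, trivial, hceq⟩
      rintro c ⟨T, hT, hr, rfl⟩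
      exact lb_eq α β ε hβα hsum hα hε0 hε1 T hT hr
  · -- CLt
    rw [CLt]
    apply le_antisymm
    · apply csInf_le
      · refine ⟨4 * α + 2 * β, ?_⟩
        rintro c ⟨T, hT, hr, rfl⟩
        exact lb_all α β ε hβα hsum hε0 hε1 T hT
      · exact ⟨Tlt, hvlt, trivial, hclt⟩
    · refine le_csInf ?_ ?_
      · exact ⟨4 * α + 2 * β, Tlt, hvlt, trivial, hclt⟩
      rintro c ⟨T, hT, hr, rfl⟩
      exact lb_all α β ε hβα hsum hε0 hε1 T hT
  · intro T hT
    obtain ⟨hval, hmin⟩ := hT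
    have hle : cost (fun k => if k = 1 then α / 2 else if k = 2 then α
        else if k = 3 then β - ε else if k = 4 then α / 2 + ε else 0)
        (Finset.Icc 1 4) T ≤ 4 * α + 2 * β := by
      have := hmin Tlt hvlt
      rw [hclt] at this
      exact this
    cases T with
    | leaf k =>
      exfalso
      have h1 := hval.2 1 (by decide)
      have h2 := hval.2 2 (by decide)
      simp only [searchKey] at h1 h2
      omega
    | eqTest k y n =>
      exfalso
      have := lb_eq α β ε hβα hsum hα hε0 hε1 (.eqTest k y n) hval trivial
      linarith
    | ltTest k y n => trivial

end TwoWCST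
end

section
/- For every real γ with (√5 − 1)/2 < γ < 1, the following hold: Σ_{i=0}^∞ (i+1)γ^i = 1/(1−γ)²; Σ_{i=0}^∞ (i+2)(γ^{2i} + γ^{2i+1}) = (2−γ²)/((1−γ)²(1+γ)); and Σ_{i=0}^∞ (i+2)(γ^{2i} + γ^{2i+1}) < Σ_{i=0}^∞ (i+1)γ^i. -/
namespace TwoWCST

lemma tsum_add_const_mul_geometric {r : ℝ} (hr : |r| < 1) (c : ℝ) :
    (∑' i : ℕ, ((i : ℝ) + c) * r ^ i) = r / (1 - r) ^ 2 + c / (1 - r) := by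
  have h1 : Summable (fun i : ℕ => (i : ℝ) * r ^ i) := by
    simpa using summable_pow_mul_geometric_of_norm_lt_one 1 (by simpa using hr)
  have h2 : Summable (fun i : ℕ => c * r ^ i) :=
    (summable_geometric_of_abs_lt_one hr).mul_left c
  calc (∑' i : ℕ, ((i : ℝ) + c) * r ^ i)
      = ∑' i : ℕ, ((i : ℝ) * r ^ i + c * r ^ i) := by
        apply tsum_congr; intro i; ring
    _ = (∑' i : ℕ, (i : ℝ) * r ^ i) + ∑' i : ℕ, c * r ^ i := Summable.tsum_add h1 h2
    _ = r / (1 - r) ^ 2 + c / (1 - r) := by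
        rw [tsum_coe_mul_geometric_of_norm_lt_one (by simpa using hr), tsum_mul_left,
          tsum_geometric_of_abs_lt_one hr]
        ring

/-- For `(√5 − 1)/2 < γ < 1`: `Σ (i+1)γ^i = 1/(1−γ)²`,
`Σ (i+2)(γ^{2i} + γ^{2i+1}) = (2−γ²)/((1−γ)²(1+γ))`, and the second sum is
strictly smaller than the first. -/
theorem stmt8 (γ : ℝ) (hγ0 : (Real.sqrt 5 - 1) / 2 < γ) (hγ1 : γ < 1) :
    (∑' i : ℕ, ((i : ℝ) + 1) * γ ^ i) = 1 / (1 - γ) ^ 2 ∧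
    (∑' i : ℕ, ((i : ℝ) + 2) * (γ ^ (2 * i) + γ ^ (2 * i + 1)))
      = (2 - γ ^ 2) / ((1 - γ) ^ 2 * (1 + γ)) ∧
    (∑' i : ℕ, ((i : ℝ) + 2) * (γ ^ (2 * i) + γ ^ (2 * i + 1)))
      < ∑' i : ℕ, ((i : ℝ) + 1) * γ ^ i := by
  have h5 : (2 : ℝ) < Real.sqrt 5 := by
    nlinarith [Real.sq_sqrt (show (0:ℝ) ≤ 5 by norm_num), Real.sqrt_nonneg 5]
  have h0 : 0 < γ := by linarith
  have habs : |γ| < 1 := abs_lt.mpr ⟨by linarith, hγ1⟩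
  have habs2 : |γ ^ 2| < 1 := by
    rw [abs_pow]; nlinarith [abs_nonneg γ]
  have hq : γ ^ 2 + γ - 1 > 0 := by
    nlinarith [Real.sq_sqrt (show (0:ℝ) ≤ 5 by norm_num), Real.sqrt_nonneg 5]
  have hne : (1 : ℝ) - γ ≠ 0 := by intro h; nlinarith
  have hne2 : (1 : ℝ) + γ ≠ 0 := by nlinarith
  have hA : (∑' i : ℕ, ((i : ℝ) + 1) * γ ^ i) = 1 / (1 - γ) ^ 2 := by
    rw [tsum_add_const_mul_geometric habs 1]
    field_simp
    ring
  have hB : (∑' i : ℕ, ((i : ℝ) + 2) * (γ ^ (2 * i) + γ ^ (2 * i + 1)))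
      = (2 - γ ^ 2) / ((1 - γ) ^ 2 * (1 + γ)) := by
    have hcongr : (∑' i : ℕ, ((i : ℝ) + 2) * (γ ^ (2 * i) + γ ^ (2 * i + 1)))
        = ∑' i : ℕ, (1 + γ) * (((i : ℝ) + 2) * (γ ^ 2) ^ i) := by
      apply tsum_congr; intro i
      rw [pow_succ, pow_mul]
      ring
    rw [hcongr, tsum_mul_left, tsum_add_const_mul_geometric habs2 2,
      show (1:ℝ) - γ ^ 2 = (1 - γ) * (1 + γ) from by ring]
    field_simp
    ring
  refine ⟨hA, hB, ?_⟩
  rw [hA, hB]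
  rw [div_lt_div_iff₀ (by positivity) (by positivity)]
  have h2 : 2 - γ ^ 2 < 1 + γ := by nlinarith
  have := mul_lt_mul_of_pos_right h2 (show (0:ℝ) < (1 - γ) ^ 2 by positivity)
  linarith

end TwoWCST
end

section
/- For every real V > 2, consider keys 1, 2, 3 with weights (1, V, 1). Then OPT({1,2}) = OPT({2,3}) = V + 1, OPT({1,2,3}) = V + 4, and OPT({2}) = 0; in particular OPT({1,2}) + OPT({2,3}) > OPT({1,2,3}) + OPT({2}), so the quadrangle inequality fails for optimal 2WCST costs. -/
namespace TwoWCST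

lemma one_le_depthOf (T : CTree) (q q' : ℕ)
    (h : searchKey T q ≠ searchKey T q') : 1 ≤ depthOf T q := by
  cases T with
  | leaf k => simp [searchKey] at h
  | eqTest k y n => simp [depthOf]
  | ltTest k y n => simp [depthOf]

lemma one_le_depthOf' (T : CTree) (a b : ℕ)
    (ha : searchKey T a = a) (hb : searchKey T b = b) (hab : a ≠ b) :
    1 ≤ depthOf T a :=
  one_le_depthOf T a b (by rw [ha, hb]; exact hab)

lemma depth3 (T : CTree)
    (h1 : searchKey T 1 = 1) (h2 : searchKey T 2 = 2) (h3 : searchKey T 3 = 3) :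
    (2 ≤ depthOf T 1 ∧ 2 ≤ depthOf T 2) ∨ (2 ≤ depthOf T 1 ∧ 2 ≤ depthOf T 3) ∨
      (2 ≤ depthOf T 2 ∧ 2 ≤ depthOf T 3) := by
  cases T with
  | leaf k =>
      simp [searchKey] at h1 h2; omega
  | eqTest k y n =>
      by_cases hk1 : (1 : ℕ) = k
      · -- keys 2 and 3 go to n
        subst hk1
        simp [searchKey] at h2 h3
        right; right
        refine ⟨?_, ?_⟩ <;> simp [depthOf] <;>
          [exact one_le_depthOf' n 2 3 h2 h3 (by norm_num);
           exact one_le_depthOf' n 3 2 h3 h2 (by norm_num)]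
      · by_cases hk3 : (3 : ℕ) = k
        · subst hk3
          simp [searchKey] at h1 h2
          left
          refine ⟨?_, ?_⟩ <;> simp [depthOf] <;>
            [exact one_le_depthOf' n 1 2 h1 h2 (by norm_num);
             exact one_le_depthOf' n 2 1 h2 h1 (by norm_num)]
        · -- keys 1 and 3 go to n (k ≠ 1, k ≠ 3)
          have e1 : searchKey n 1 = 1 := by
            have := h1; simpa [searchKey, hk1] using this
          have e3 : searchKey n 3 = 3 := by
            have := h3; simpa [searchKey, hk3] using this
          right; left
          constructor <;> simp [depthOf, hk1, hk3]
          · exact one_le_depthOf' n 1 3 e1 e3 (by norm_num)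
          · exact one_le_depthOf' n 3 1 e3 e1 (by norm_num)
  | ltTest k y n =>
      by_cases hk : (2 : ℕ) < k
      · -- 1 and 2 both < k, go to y
        have hk1 : (1 : ℕ) < k := by omega
        have e1 : searchKey y 1 = 1 := by simpa [searchKey, hk1] using h1
        have e2 : searchKey y 2 = 2 := by simpa [searchKey, hk] using h2
        left
        constructor <;> simp [depthOf, hk1, hk]
        · exact one_le_depthOf' y 1 2 e1 e2 (by norm_num)
        · exact one_le_depthOf' y 2 1 e2 e1 (by norm_num)
      · -- 2 and 3 both ≥ k, go to n
        have hk3 : ¬ (3 : ℕ) < k := by omega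
        have e2 : searchKey n 2 = 2 := by simpa [searchKey, hk] using h2
        have e3 : searchKey n 3 = 3 := by simpa [searchKey, hk3] using h3
        right; right
        constructor <;> simp [depthOf, hk, hk3]
        · exact one_le_depthOf' n 2 3 e2 e3 (by norm_num)
        · exact one_le_depthOf' n 3 2 e3 e2 (by norm_num)

/-- The quadrangle inequality fails: for keys `1,2,3` with weights `(1,V,1)`,
`V > 2`, we get `OPT {1,2} + OPT {2,3} > OPT {1,2,3} + OPT {2}`. -/
theorem stmt9 (V : ℝ) (hV : 2 < V) :
    OPT (fun k => if k = 2 then V else 1) {1, 2} = V + 1 ∧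
    OPT (fun k => if k = 2 then V else 1) {2, 3} = V + 1 ∧
    OPT (fun k => if k = 2 then V else 1) {1, 2, 3} = V + 4 ∧
    OPT (fun k => if k = 2 then V else 1) ({2} : Finset ℕ) = 0 ∧
    OPT (fun k => if k = 2 then V else 1) {1, 2, 3}
        + OPT (fun k => if k = 2 then V else 1) ({2} : Finset ℕ)
      < OPT (fun k => if k = 2 then V else 1) {1, 2}
        + OPT (fun k => if k = 2 then V else 1) {2, 3} := by
  set w : ℕ → ℝ := fun k => if k = 2 then V else 1 with hw
  have hV0 : (0:ℝ) < V := by linarith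
  have hw1 : w 1 = 1 := by simp [hw]
  have hw2 : w 2 = V := by simp [hw]
  have hw3 : w 3 = 1 := by simp [hw]
  -- OPT {1,2} = V + 1
  have h12 : OPT w {1, 2} = V + 1 := by
    have hub : (V + 1) ∈ {c | ∃ T, Valid ({1,2} : Finset ℕ) T ∧ cost w {1,2} T = c} := by
      refine ⟨.ltTest 2 (.leaf 1) (.leaf 2), ⟨by decide, by decide⟩, ?_⟩
      simp [cost, Finset.sum_pair (show (1:ℕ) ≠ 2 by norm_num), hw1, hw2, depthOf]
      ring
    have hlb : ∀ c ∈ {c | ∃ T, Valid ({1,2} : Finset ℕ) T ∧ cost w {1,2} T = c},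
        V + 1 ≤ c := by
      rintro c ⟨T, ⟨hsub, hs⟩, rfl⟩
      have e1 : searchKey T 1 = 1 := hs 1 (by decide)
      have e2 : searchKey T 2 = 2 := hs 2 (by decide)
      have d1 : 1 ≤ depthOf T 1 := one_le_depthOf' T 1 2 e1 e2 (by norm_num)
      have d2 : 1 ≤ depthOf T 2 := one_le_depthOf' T 2 1 e2 e1 (by norm_num)
      have d1' : (1:ℝ) ≤ depthOf T 1 := by exact_mod_cast d1
      have d2' : (1:ℝ) ≤ depthOf T 2 := by exact_mod_cast d2
      simp only [cost, Finset.sum_pair (show (1:ℕ) ≠ 2 by norm_num), hw1, hw2]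
      nlinarith
    exact le_antisymm (csInf_le ⟨V + 1, hlb⟩ hub) (le_csInf ⟨_, hub⟩ hlb)
  -- OPT {2,3} = V + 1
  have h23 : OPT w {2, 3} = V + 1 := by
    have hub : (V + 1) ∈ {c | ∃ T, Valid ({2,3} : Finset ℕ) T ∧ cost w {2,3} T = c} := by
      refine ⟨.ltTest 3 (.leaf 2) (.leaf 3), ⟨by decide, by decide⟩, ?_⟩
      simp [cost, Finset.sum_pair (show (2:ℕ) ≠ 3 by norm_num), hw2, hw3, depthOf]
    have hlb : ∀ c ∈ {c | ∃ T, Valid ({2,3} : Finset ℕ) T ∧ cost w {2,3} T = c},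
        V + 1 ≤ c := by
      rintro c ⟨T, ⟨hsub, hs⟩, rfl⟩
      have e2 : searchKey T 2 = 2 := hs 2 (by decide)
      have e3 : searchKey T 3 = 3 := hs 3 (by decide)
      have d2 : 1 ≤ depthOf T 2 := one_le_depthOf' T 2 3 e2 e3 (by norm_num)
      have d3 : 1 ≤ depthOf T 3 := one_le_depthOf' T 3 2 e3 e2 (by norm_num)
      have d2' : (1:ℝ) ≤ depthOf T 2 := by exact_mod_cast d2
      have d3' : (1:ℝ) ≤ depthOf T 3 := by exact_mod_cast d3
      simp only [cost, Finset.sum_pair (show (2:ℕ) ≠ 3 by norm_num), hw2, hw3]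
      nlinarith
    exact le_antisymm (csInf_le ⟨V + 1, hlb⟩ hub) (le_csInf ⟨_, hub⟩ hlb)
  -- OPT {1,2,3} = V + 4
  have hsum3 : ∀ T : CTree, cost w {1,2,3} T =
      1 * depthOf T 1 + V * depthOf T 2 + 1 * depthOf T 3 := by
    intro T
    rw [cost, show ({1,2,3} : Finset ℕ) = insert 1 {2,3} from rfl,
      Finset.sum_insert (by decide),
      Finset.sum_pair (show (2:ℕ) ≠ 3 by norm_num), hw1, hw2, hw3]
    ring
  have h123 : OPT w {1, 2, 3} = V + 4 := by
    have hub : (V + 4) ∈ {c | ∃ T, Valid ({1,2,3} : Finset ℕ) T ∧ cost w {1,2,3} T = c} := by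
      refine ⟨.eqTest 2 (.leaf 2) (.ltTest 2 (.leaf 1) (.leaf 3)), ⟨by decide, by decide⟩, ?_⟩
      rw [hsum3]
      norm_num [depthOf]
      ring
    have hlb : ∀ c ∈ {c | ∃ T, Valid ({1,2,3} : Finset ℕ) T ∧ cost w {1,2,3} T = c},
        V + 4 ≤ c := by
      rintro c ⟨T, ⟨hsub, hs⟩, rfl⟩
      have e1 : searchKey T 1 = 1 := hs 1 (by decide)
      have e2 : searchKey T 2 = 2 := hs 2 (by decide)
      have e3 : searchKey T 3 = 3 := hs 3 (by decide)
      have d1 : (1:ℝ) ≤ depthOf T 1 := by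
        exact_mod_cast one_le_depthOf' T 1 2 e1 e2 (by norm_num)
      have d2 : (1:ℝ) ≤ depthOf T 2 := by
        exact_mod_cast one_le_depthOf' T 2 1 e2 e1 (by norm_num)
      have d3 : (1:ℝ) ≤ depthOf T 3 := by
        exact_mod_cast one_le_depthOf' T 3 1 e3 e1 (by norm_num)
      rw [hsum3]
      rcases depth3 T e1 e2 e3 with ⟨ha, hb⟩ | ⟨ha, hb⟩ | ⟨ha, hb⟩ <;>
        [ (have ha' : (2:ℝ) ≤ depthOf T 1 := by exact_mod_cast ha;
           have hb' : (2:ℝ) ≤ depthOf T 2 := by exact_mod_cast hb;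
           nlinarith);
          (have ha' : (2:ℝ) ≤ depthOf T 1 := by exact_mod_cast ha;
           have hb' : (2:ℝ) ≤ depthOf T 3 := by exact_mod_cast hb;
           nlinarith);
          (have ha' : (2:ℝ) ≤ depthOf T 2 := by exact_mod_cast ha;
           have hb' : (2:ℝ) ≤ depthOf T 3 := by exact_mod_cast hb;
           nlinarith)]
    exact le_antisymm (csInf_le ⟨V + 4, hlb⟩ hub) (le_csInf ⟨_, hub⟩ hlb)
  -- OPT {2} = 0
  have h2 : OPT w ({2} : Finset ℕ) = 0 := by
    have hub : (0:ℝ) ∈ {c | ∃ T, Valid ({2} : Finset ℕ) T ∧ cost w {2} T = c} := by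
      refine ⟨.leaf 2, ⟨by decide, by decide⟩, ?_⟩
      simp [cost, depthOf]
    have hlb : ∀ c ∈ {c | ∃ T, Valid ({2} : Finset ℕ) T ∧ cost w {2} T = c},
        (0:ℝ) ≤ c := by
      rintro c ⟨T, _, rfl⟩
      rw [cost, Finset.sum_singleton, hw2]
      positivity
    exact le_antisymm (csInf_le ⟨0, hlb⟩ hub) (le_csInf ⟨_, hub⟩ hlb)
  refine ⟨h12, h23, h123, h2, ?_⟩
  rw [h12, h23, h123, h2]
  linarith

end TwoWCST
end
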